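/- arXiv:2111.11823 — 10 statements merged into one kernel-verified Lean document; each statement's English description precedes it below -/
import Mathlib

section
/- Let κ be a regular uncountable cardinal and let T be a κ-tree such that the β-th level of T has cardinality strictly less than |β| for every infinite ordinal β < κ (a 'very slim' κ-tree). Then the set of cofinal branches of T has cardinality strictly less than κ. -/
open Cardinal Set

noncomputable section

namespace GK

/-- The restriction of a function on ordinals to the domain `β` (zero outside of it). -/
def restrict (t : Ordinal → Ordinal) (β : Ordinal) : Ordinal → Ordinal :=
  fun α => if α < β then t α else 0

/-- `T` is a tree on the cardinal `κ`: a set of (normalized) functions `t : β → κ`,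
`β < κ`, closed under restriction to smaller ordinals. -/
def IsTreeOn (κ : Cardinal.{0}) (T : Set (Ordinal × (Ordinal → Ordinal))) : Prop :=
  (∀ p ∈ T, p.1 < κ.ord ∧ (∀ α, p.2 α < κ.ord) ∧ p.2 = restrict p.2 p.1) ∧
  (∀ p ∈ T, ∀ γ < p.1, (γ, restrict p.2 γ) ∈ T)

/-- The `β`-th level of the tree `T`: the functions in `T` with domain `β`. -/
def level (T : Set (Ordinal × (Ordinal → Ordinal))) (β : Ordinal) :
    Set (Ordinal → Ordinal) := {t | (β, t) ∈ T}

/-- The set of cofinal branches of a tree `T` on `κ`: (normalized) functions `b : κ → κ`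
all of whose restrictions to `β < κ` belong to `T`. -/
def branches (κ : Cardinal.{0}) (T : Set (Ordinal × (Ordinal → Ordinal))) :
    Set (Ordinal → Ordinal) :=
  {b | b = restrict b κ.ord ∧ ∀ β < κ.ord, (β, restrict b β) ∈ T}

/-- `T` is a `κ`-tree: a tree on `κ` all of whose levels below `κ` are nonempty. -/
def IsKappaTree (κ : Cardinal.{0}) (T : Set (Ordinal × (Ordinal → Ordinal))) : Prop :=
  IsTreeOn κ T ∧ ∀ β < κ.ord, (level T β).Nonempty

/-- `C` is a closed unbounded subset of the ordinal `o`. -/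
def IsClubIn (C : Set Ordinal) (o : Ordinal) : Prop :=
  C ⊆ Set.Iio o ∧
  (∀ α < o, ∃ β ∈ C, α < β) ∧
  (∀ δ, δ < o → 0 < δ → (∀ α < δ, ∃ β ∈ C, α < β ∧ β < δ) → δ ∈ C)

/-- `S` is a stationary subset of the ordinal `o`: it meets every club of `o`. -/
def IsStationaryIn (S : Set Ordinal) (o : Ordinal) : Prop :=
  ∀ C, IsClubIn C o → (S ∩ C).Nonempty

/-- `U` is an ultrafilter over the cardinal `κ` (realized as the set of
ordinals below `κ.ord`). -/
def IsUltrafilterOn (κ : Cardinal.{0}) (U : Set (Set Ordinal)) : Prop :=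
  (∀ A ∈ U, A ⊆ Set.Iio κ.ord) ∧
  Set.Iio κ.ord ∈ U ∧
  ∅ ∉ U ∧
  (∀ A B : Set Ordinal, A ∈ U → A ⊆ B → B ⊆ Set.Iio κ.ord → B ∈ U) ∧
  (∀ A B : Set Ordinal, A ∈ U → B ∈ U → A ∩ B ∈ U) ∧
  (∀ A : Set Ordinal, A ⊆ Set.Iio κ.ord → A ∈ U ∨ Set.Iio κ.ord \ A ∈ U)

/-- `U` is σ-complete: closed under countable intersections. -/
def SigmaComplete (U : Set (Set Ordinal)) : Prop :=
  ∀ f : ℕ → Set Ordinal, (∀ n, f n ∈ U) → (⋂ n, f n) ∈ U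

/-- `U` is `κ`-complete: closed under intersections of fewer than `κ` many sets. -/
def KappaComplete (κ : Cardinal.{0}) (U : Set (Set Ordinal)) : Prop :=
  ∀ (ι : Type) (f : ι → Set Ordinal), #ι < κ → (∀ i, f i ∈ U) →
    (Set.Iio κ.ord ∩ ⋂ i, f i) ∈ U

/-- The Galvin property `Gal(U, κ, κ⁺)`: for every family of `κ⁺` many sets in `U`
there is a subfamily of `κ` many of them whose intersection is in `U`. -/
def Galvin (κ : Cardinal.{0}) (U : Set (Set Ordinal)) : Prop :=
  ∀ C : Ordinal → Set Ordinal, (∀ α < (Order.succ κ).ord, C α ∈ U) →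
    ∃ A : Set Ordinal, A ⊆ Set.Iio (Order.succ κ).ord ∧ #A = Cardinal.lift.{1} κ ∧
      (⋂ α ∈ A, C α) ∈ U

/-- A very slim `κ`-tree (all infinite levels `β` of size `< |β|`) on a
regular uncountable cardinal `κ` has fewer than `κ` many cofinal branches. -/
theorem very_slim_trees_have_few_branches (κ : Cardinal.{0})
    (hreg : κ.IsRegular) (hunc : ℵ₀ < κ)
    (T : Set (Ordinal × (Ordinal → Ordinal))) (hT : IsKappaTree κ T)
    (hveryslim : ∀ β : Ordinal, Ordinal.omega0 ≤ β → β < κ.ord →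
      #(level T β) < Cardinal.lift.{1} β.card) :
    #(branches κ T) < Cardinal.lift.{1} κ := by
  by_contra hcon
  push_neg at hcon
  have hIio : #(Set.Iio κ.ord) = Cardinal.lift.{1} κ := by
    rw [Ordinal.mk_Iio_ordinal, Cardinal.card_ord]
  rw [← hIio] at hcon
  obtain ⟨b⟩ := (Cardinal.le_def _ _).mp hcon
  have hk0 : ℵ₀ ≤ κ := hunc.le
  have hlim : Order.IsSuccLimit κ.ord := Cardinal.isSuccLimit_ord hk0
  have hcof : κ.ord.cof = κ := hreg.cof_eq
  -- the chosen branches, as a total function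
  set bb : Ordinal → Ordinal → Ordinal :=
    fun α => if h : α < κ.ord then (b ⟨α, h⟩ : Ordinal → Ordinal) else fun _ => 0 with hbb
  have hbbmem : ∀ α (h : α < κ.ord), bb α ∈ branches κ T := by
    intro α h; rw [hbb]; simp only [dif_pos h]; exact (b ⟨α, h⟩).2
  -- splitting points
  set sp : Ordinal → Ordinal → Ordinal :=
    fun α γ => sInf {δ | bb α δ ≠ bb γ δ} with hsp_def
  have hsp : ∀ α γ, α < κ.ord → γ < κ.ord → α ≠ γ →
      sp α γ < κ.ord ∧ bb α (sp α γ) ≠ bb γ (sp α γ) := by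
    intro α γ hα hγ hne
    have hbne : bb α ≠ bb γ := by
      rw [hbb]; simp only [dif_pos hα, dif_pos hγ]
      intro h
      exact hne (congrArg Subtype.val (b.injective (Subtype.ext h)))
    obtain ⟨δ, hδ⟩ := Function.ne_iff.mp hbne
    have hδlt : δ < κ.ord := by
      by_contra hge
      apply hδ
      have h1 := (hbbmem α hα).1
      have h2 := (hbbmem γ hγ).1
      rw [h1, h2]
      simp [restrict, if_neg (not_lt.mpr (not_lt.mp hge))]
    have hmem : δ ∈ {δ | bb α δ ≠ bb γ δ} := hδ
    have hne' : {δ | bb α δ ≠ bb γ δ}.Nonempty := ⟨δ, hmem⟩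
    exact ⟨lt_of_le_of_lt (csInf_le' hmem) hδlt, csInf_mem hne'⟩
  -- sup of splitting points below β
  set S : Ordinal → Ordinal :=
    fun β => Ordinal.bsup β (fun α _ => Ordinal.bsup β (fun γ _ => sp α γ + 1)) with hS
  have hsp_small : ∀ α γ, α < κ.ord → γ < κ.ord → sp α γ + 1 < κ.ord := by
    intro α γ hα hγ
    rcases eq_or_ne α γ with rfl | hne
    · have : sp α α = 0 := by
        rw [hsp_def]
        convert Ordinal.sInf_empty using 2
        simp
      rw [this]
      exact hlim.succ_lt hlim.pos
    · exact hlim.succ_lt (hsp α γ hα hγ hne).1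
  have hS_lt : ∀ β, β < κ.ord → S β < κ.ord := by
    intro β hβ
    have hcard : β.card < κ.ord.cof := by rw [hcof]; exact Cardinal.lt_ord.mp hβ
    exact Ordinal.bsup_lt_ord hcard fun α hα =>
      Ordinal.bsup_lt_ord hcard fun γ hγ =>
        hsp_small α γ (hα.trans hβ) (hγ.trans hβ)
  have hS_bound : ∀ β α γ, α < β → γ < β → sp α γ + 1 ≤ S β := by
    intro β α γ hα hγ
    calc sp α γ + 1 ≤ Ordinal.bsup β (fun γ _ => sp α γ + 1) := Ordinal.le_bsup _ γ hγ
      _ ≤ S β := Ordinal.le_bsup _ α hα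
  -- the closing sequence
  set seq : ℕ → Ordinal := fun n => Nat.rec Ordinal.omega0 (fun _ ih => max (S ih) (ih + 1)) n
    with hseq
  have hseq0 : seq 0 = Ordinal.omega0 := rfl
  have hseqsucc : ∀ n, seq (n + 1) = max (S (seq n)) (seq n + 1) := fun n => rfl
  have hseq_lt : ∀ n, seq n < κ.ord := by
    intro n
    induction n with
    | zero =>
      rw [hseq0]
      exact Cardinal.lt_ord.mpr (by rw [Ordinal.card_omega0]; exact hunc)
    | succ n ih =>
      rw [hseqsucc]
      exact max_lt (hS_lt _ ih) (hlim.succ_lt ih)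
  have hseq_mono : StrictMono seq := by
    apply strictMono_nat_of_lt_succ
    intro n
    rw [hseqsucc]
    have : seq n < seq n + 1 := by
      rw [Ordinal.add_one_eq_succ]; exact Order.lt_succ _
    exact lt_of_lt_of_le this (le_max_right _ _)
  set βs : Ordinal := ⨆ n, seq n with hβs
  have hbdd : BddAbove (Set.range seq) := Ordinal.bddAbove_range seq
  have hle : ∀ n, seq n ≤ βs := fun n => le_ciSup hbdd n
  have hβs_lt : βs < κ.ord := by
    apply Ordinal.iSup_lt_ord _ hseq_lt
    rw [hcof, Cardinal.mk_nat]
    exact hunc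
  have hω : Ordinal.omega0 ≤ βs := hseq0 ▸ hle 0
  have hclosed : ∀ δ δ', δ < βs → δ' < βs → sp δ δ' < βs := by
    intro δ δ' h1 h2
    obtain ⟨n, hn⟩ := (lt_ciSup_iff hbdd).mp h1
    obtain ⟨m, hm⟩ := (lt_ciSup_iff hbdd).mp h2
    have hδn : δ < seq (max n m) := hn.trans_le (hseq_mono.monotone (le_max_left n m))
    have hδm : δ' < seq (max n m) := hm.trans_le (hseq_mono.monotone (le_max_right n m))
    have := hS_bound (seq (max n m)) δ δ' hδn hδm
    have hlt1 : sp δ δ' < sp δ δ' + 1 := by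
      rw [Ordinal.add_one_eq_succ]; exact Order.lt_succ _
    have h3 : sp δ δ' < seq (max n m + 1) := by
      rw [hseqsucc]
      exact lt_of_lt_of_le (lt_of_lt_of_le hlt1 this) (le_max_left _ _)
    exact h3.trans_le (hle (max n m + 1))
  -- the injection into level βs
  have hmemlvl : ∀ δ : Set.Iio βs, restrict (bb δ) βs ∈ level T βs := by
    intro ⟨δ, hδ⟩
    exact (hbbmem δ (hδ.trans hβs_lt)).2 βs hβs_lt
  set F : Set.Iio βs → level T βs := fun δ => ⟨restrict (bb δ) βs, hmemlvl δ⟩ with hF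
  have hFinj : Function.Injective F := by
    rintro ⟨δ, hδ⟩ ⟨δ', hδ'⟩ heq
    simp only [hF, Subtype.mk_eq_mk] at heq
    ext1
    by_contra hne
    have hδκ : δ < κ.ord := hδ.trans hβs_lt
    have hδ'κ : δ' < κ.ord := hδ'.trans hβs_lt
    obtain ⟨_, hdiff⟩ := hsp δ δ' hδκ hδ'κ hne
    have hsplt : sp δ δ' < βs := hclosed δ δ' hδ hδ'
    apply hdiff
    have := congrFun heq (sp δ δ')
    simpa [restrict, if_pos hsplt] using this
  have h1 : Cardinal.lift.{1} βs.card ≤ #(level T βs) := by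
    rw [← Ordinal.mk_Iio_ordinal]
    exact Cardinal.mk_le_of_injective hFinj
  exact absurd (h1.trans_lt (hveryslim βs hω hβs_lt)) (lt_irrefl _)

end GK
end
end

section
/- If there exists a Kurepa tree on ω₁, then the polarized partition relation (ω₂, ω₁) → (2, ω₁)_ω fails; that is, there exists a coloring c : ω₂ × ω₁ → ω such that for every set A ⊆ ω₂ with |A| = 2 and every set B ⊆ ω₁ with |B| = ℵ₁, the restriction of c to A × B is not constant. -/
open Cardinal Set

noncomputable section

namespace GK

/-- If there is a Kurepa tree on `ω₁`, then the polarized partition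
relation `(ω₂, ω₁) → (2, ω₁)_ω` fails. -/
theorem kurepa_tree_negative_polarized_relation
    (T : Set (Ordinal × (Ordinal → Ordinal)))
    (hT : IsKappaTree (aleph (1 : Ordinal.{0})) T)
    (hlev : ∀ β < (aleph (1 : Ordinal.{0})).ord, #(level T β) ≤ ℵ₀)
    (hbr : Cardinal.lift.{1} (aleph (2 : Ordinal.{0})) ≤ #(branches (aleph (1 : Ordinal.{0})) T)) :
    ∃ c : Ordinal → Ordinal → ℕ,
      ∀ A : Set Ordinal, A ⊆ Set.Iio (aleph (2 : Ordinal.{0})).ord → #A = 2 →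
      ∀ B : Set Ordinal, B ⊆ Set.Iio (aleph (1 : Ordinal.{0})).ord → #B = Cardinal.lift.{1} (aleph (1 : Ordinal.{0})) →
      ¬ ∃ n : ℕ, ∀ α ∈ A, ∀ β ∈ B, c α β = n := by
  classical
  set κ1 := aleph (1 : Ordinal.{0}) with hκ1
  set κ2 := aleph (2 : Ordinal.{0}) with hκ2
  -- branch selector
  have h1 : #(Set.Iio κ2.ord) = Cardinal.lift.{1} κ2 := by
    rw [Ordinal.mk_Iio_ordinal, Cardinal.card_ord]
  have h2 : #(Set.Iio κ2.ord) ≤ #(branches κ1 T) := h1 ▸ hbr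
  obtain ⟨f⟩ := (Cardinal.le_def _ _).1 h2
  -- level enumerations
  have hE : ∀ β : Ordinal, ∃ g : (Ordinal → Ordinal) → ℕ,
      ∀ s t, s ∈ level T β → t ∈ level T β → g s = g t → s = t := by
    intro β
    by_cases hβ : β < κ1.ord
    · have hc : Countable (level T β) := Cardinal.mk_le_aleph0_iff.1 (hlev β hβ)
      obtain ⟨e, he⟩ := Countable.exists_injective_nat (level T β)
      refine ⟨fun t => if h : t ∈ level T β then e ⟨t, h⟩ else 0, ?_⟩
      intro s t hs ht hst
      have : e ⟨s, hs⟩ = e ⟨t, ht⟩ := by simpa [hs, ht] using hst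
      exact congrArg Subtype.val (he this)
    · exact ⟨fun _ => 0, fun s t hs _ _ => absurd (hT.1.1 (β, s) hs).1 hβ⟩
  choose g hg using hE
  refine ⟨fun α β => if h : α < κ2.ord then g β (restrict (f ⟨α, h⟩).1 β) else 0, ?_⟩
  rintro A hA hA2 B hB hBcard ⟨n, hn⟩
  obtain ⟨x, y, hxy, -⟩ := Cardinal.mk_eq_two_iff.1 hA2
  have hx2 : (x : Ordinal) < κ2.ord := hA x.2
  have hy2 : (y : Ordinal) < κ2.ord := hA y.2
  set b₁ := f ⟨(x : Ordinal), hx2⟩ with hb₁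
  set b₂ := f ⟨(y : Ordinal), hy2⟩ with hb₂
  have hvne : (x : Ordinal) ≠ (y : Ordinal) := fun h => hxy (Subtype.ext h)
  have hbne : b₁.1 ≠ b₂.1 := by
    intro h
    exact hvne (congrArg (fun z => z.1) (f.injective (Subtype.ext h)))
  -- the branches differ at some point below ω₁
  have hdif : ∃ γ, γ < κ1.ord ∧ b₁.1 γ ≠ b₂.1 γ := by
    by_contra h
    push_neg at h
    apply hbne
    funext γ
    by_cases hγ : γ < κ1.ord
    · exact h γ hγ
    · have e1 : b₁.1 γ = 0 := by
        conv_lhs => rw [b₁.2.1]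
        simp [restrict, hγ]
      have e2 : b₂.1 γ = 0 := by
        conv_lhs => rw [b₂.2.1]
        simp [restrict, hγ]
      rw [e1, e2]
  obtain ⟨γ, hγ1, hγne⟩ := hdif
  -- B is unbounded in ω₁
  have hub : ∃ β ∈ B, γ < β := by
    by_contra h
    push_neg at h
    have hsub : B ⊆ Set.Iio (Order.succ γ) := fun β hβ =>
      Order.lt_succ_of_le (h β hβ)
    have hlt : Order.succ γ < κ1.ord :=
      (Cardinal.isSuccLimit_ord (aleph0_le_aleph 1)).succ_lt hγ1
    have hcard : (Order.succ γ).card < κ1 := Cardinal.lt_ord.1 hlt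
    have : #B < Cardinal.lift.{1} κ1 := by
      calc #B ≤ #(Set.Iio (Order.succ γ)) := Cardinal.mk_le_mk_of_subset hsub
        _ = Cardinal.lift.{1} (Order.succ γ).card := Ordinal.mk_Iio_ordinal _
        _ < Cardinal.lift.{1} κ1 := Cardinal.lift_lt.2 hcard
    exact this.ne hBcard
  obtain ⟨β, hβB, hγβ⟩ := hub
  have hβ1 : β < κ1.ord := hB hβB
  have m1 : restrict b₁.1 β ∈ level T β := b₁.2.2 β hβ1
  have m2 : restrict b₂.1 β ∈ level T β := b₂.2.2 β hβ1
  have e1 := hn _ x.2 β hβB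
  have e2 := hn _ y.2 β hβB
  simp only [dif_pos hx2] at e1
  simp only [dif_pos hy2] at e2
  have : restrict b₁.1 β = restrict b₂.1 β :=
    hg β _ _ m1 m2 (e1.trans e2.symm)
  have := congrFun this γ
  simp only [restrict, if_pos hγβ] at this
  exact hγne this

end GK
end
end

section
/- If there exists a Kurepa tree on ω₁, then there is a family {f_α : α < ω₂} of pairwise distinct functions from ω₁ to ω such that for all α < α' < ω₂ there exists β₀ < ω₁ with f_α(β) ≠ f_{α'}(β) for every β with β₀ ≤ β < ω₁ (the functions are pairwise eventually different). -/
open Cardinal Set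

noncomputable section

namespace GK

/-- If there is a Kurepa tree on `ω₁`, then there is a family of `ω₂` many
pairwise distinct, pairwise eventually different functions from `ω₁` to `ω`. -/
theorem kurepa_tree_eventually_different_family
    (T : Set (Ordinal × (Ordinal → Ordinal)))
    (hT : IsKappaTree (aleph (1 : Ordinal.{0})) T)
    (hlev : ∀ β < (aleph (1 : Ordinal.{0})).ord, #(level T β) ≤ ℵ₀)
    (hbr : Cardinal.lift.{1} (aleph (2 : Ordinal.{0})) ≤ #(branches (aleph (1 : Ordinal.{0})) T)) :
    ∃ f : Ordinal → Ordinal → ℕ,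
      ∀ α α' : Ordinal, α < α' → α' < (aleph (2 : Ordinal.{0})).ord →
        ∃ β₀ < (aleph (1 : Ordinal.{0})).ord, ∀ β : Ordinal, β₀ ≤ β → β < (aleph (1 : Ordinal.{0})).ord →
          f α β ≠ f α' β := by
  classical
  set κ := (aleph (1 : Ordinal.{0})).ord with hκ
  -- injection from Iio (aleph 2).ord into branches
  have h2 : #(Set.Iio (aleph (2 : Ordinal.{0})).ord) ≤ #(branches (aleph (1 : Ordinal.{0})) T) := by
    rw [Ordinal.mk_Iio_ordinal, Cardinal.card_ord]; exact hbr
  obtain ⟨emb⟩ := (Cardinal.le_def _ _).mp h2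
  let b : Ordinal → (Ordinal → Ordinal) := fun α =>
    if h : α < (aleph (2 : Ordinal.{0})).ord then (emb ⟨α, h⟩ : Ordinal → Ordinal) else fun _ => 0
  -- injections from levels into ℕ
  have he : ∀ β : Ordinal, ∃ g : level T β → ℕ, β < κ → Function.Injective g := by
    intro β
    by_cases hβ : β < κ
    · have : Countable (level T β) := Cardinal.mk_le_aleph0_iff.mp (hlev β hβ)
      obtain ⟨g, hg⟩ := Countable.exists_injective_nat (level T β)
      exact ⟨g, fun _ => hg⟩
    · exact ⟨fun _ => 0, fun h => absurd h hβ⟩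
  choose e he using he
  refine ⟨fun α β => if h : (β, restrict (b α) β) ∈ T then e β ⟨restrict (b α) β, h⟩ else 0,
    fun α α' hlt hα' => ?_⟩
  have hα : α < (aleph (2 : Ordinal.{0})).ord := hlt.trans hα'
  have hbα : b α ∈ branches (aleph (1 : Ordinal.{0})) T := by
    simp only [b, dif_pos hα]; exact (emb ⟨α, hα⟩).2
  have hbα' : b α' ∈ branches (aleph (1 : Ordinal.{0})) T := by
    simp only [b, dif_pos hα']; exact (emb ⟨α', hα'⟩).2
  have hne : b α ≠ b α' := by
    intro h
    simp only [b, dif_pos hα, dif_pos hα'] at h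
    have := emb.injective (Subtype.coe_injective h)
    exact hlt.ne (congrArg Subtype.val this)
  obtain ⟨γ, hγne⟩ := Function.ne_iff.mp hne
  have hγ : γ < κ := by
    by_contra hγκ
    apply hγne
    have h1 := hbα.1; have h2' := hbα'.1
    rw [h1, h2']
    simp only [restrict, if_neg (show ¬γ < (aleph (1 : Ordinal.{0})).ord from hγκ)]
  have hβ₀ : γ + 1 < κ := by
    rw [Ordinal.add_one_eq_succ]
    exact (Cardinal.isSuccLimit_ord (Cardinal.aleph0_le_aleph 1)).succ_lt hγ
  refine ⟨γ + 1, hβ₀, fun β hβ hβκ => ?_⟩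
  have hγβ : γ < β := by
    have h := Order.lt_succ γ
    rw [← Ordinal.add_one_eq_succ] at h
    exact h.trans_le hβ
  have hm : (β, restrict (b α) β) ∈ T := hbα.2 β hβκ
  have hm' : (β, restrict (b α') β) ∈ T := hbα'.2 β hβκ
  have hrne : restrict (b α) β ≠ restrict (b α') β := by
    intro h
    apply hγne
    have := congrFun h γ
    simpa [restrict, hγβ] using this
  simp only [dif_pos hm, dif_pos hm']
  intro h
  exact hrne (congrArg Subtype.val (he β hβκ h))

end GK
end
end

section
/- Let κ be an infinite cardinal. If there exists a Kurepa tree on κ⁺ (a κ⁺-tree all of whose levels have cardinality at most κ and which has at least κ⁺⁺ many cofinal branches), then the polarized partition relation (κ⁺⁺, κ⁺) → (2, κ⁺)_κ fails; that is, there exists a coloring c : κ⁺⁺ × κ⁺ → κ such that for every A ⊆ κ⁺⁺ with |A| = 2 and every B ⊆ κ⁺ with |B| = κ⁺, the restriction of c to A × B is not constant. -/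
/-!
Enumerate `κ⁺⁺` distinct cofinal branches `b_α` and code each level `L_β`, which has at most `κ`
elements, injectively by ordinals below `κ`; colour `(α, β)` by the code of `b_α ↾ β`. Two distinct
branches `b_α ≠ b_α'` already differ at some `ξ < κ⁺`, and a set `B ⊆ κ⁺` of size `κ⁺` is unbounded,
so it contains some `β > ξ`: there `b_α ↾ β ≠ b_α' ↾ β`, hence the colours of `(α, β)` and `(α', β)`
differ.
-/

open Cardinal Set

noncomputable section

namespace GK

universe u v

theorem restrict_apply_of_lt {t : Ordinal → Ordinal} {β α : Ordinal} (h : α < β) :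
    restrict t β α = t α := if_pos h

theorem restrict_apply_of_le {t : Ordinal → Ordinal} {β α : Ordinal} (h : β ≤ α) :
    restrict t β α = 0 := if_neg h.not_gt

theorem exists_injOn_lt_ord {X : Type u} {s : Set X} {κ : Cardinal.{v}} (hκ : κ ≠ 0)
    (hs : Cardinal.lift.{v} #s ≤ Cardinal.lift.{u} κ) :
    ∃ code : X → Ordinal.{v}, InjOn code s ∧ ∀ x, code x < κ.ord := by
  classical
  obtain ⟨e⟩ : Nonempty (s ↪ Iio κ.ord) := by
    rw [← Cardinal.lift_mk_le', Cardinal.mk_Iio_ordinal, Cardinal.card_ord, Cardinal.lift_lift]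
    simpa using Cardinal.lift_le.{v + 1}.mpr hs
  refine ⟨fun x => if hx : x ∈ s then e ⟨x, hx⟩ else 0, fun x hx y hy hxy => ?_, fun x => ?_⟩
  · simp only [dif_pos hx, dif_pos hy] at hxy
    exact congrArg Subtype.val (e.injective (Subtype.ext hxy))
  · dsimp only
    split_ifs
    · exact (e _).2
    · exact Cardinal.ord_pos.mpr (pos_iff_ne_zero.mpr hκ)

theorem exists_injOn_mapsTo_Iio_ord {X : Type u} [Nonempty X] {s : Set X} {μ : Cardinal.{v}}
    (hs : Cardinal.lift.{u} μ ≤ Cardinal.lift.{v} #s) :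
    ∃ f : Ordinal.{v} → X, InjOn f (Iio μ.ord) ∧ MapsTo f (Iio μ.ord) s := by
  classical
  obtain ⟨e⟩ : Nonempty (Iio μ.ord ↪ s) := by
    rw [← Cardinal.lift_mk_le', Cardinal.mk_Iio_ordinal, Cardinal.card_ord, Cardinal.lift_lift]
    simpa using Cardinal.lift_le.{v + 1}.mpr hs
  refine ⟨fun α => if hα : α < μ.ord then e ⟨α, hα⟩ else Classical.arbitrary X,
    fun α hα β hβ hαβ => ?_, fun α hα => ?_⟩
  · simp only [dif_pos (show α < μ.ord from hα), dif_pos (show β < μ.ord from hβ)] at hαβ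
    exact congrArg Subtype.val (e.injective (Subtype.ext hαβ))
  · simp only [dif_pos (show α < μ.ord from hα)]
    exact (e _).2

theorem exists_mem_gt_of_mk_eq {μ : Cardinal.{u}} (hμ : ℵ₀ ≤ μ) {B : Set Ordinal.{u}}
    (hB : #B = Cardinal.lift.{u + 1} μ) {ξ : Ordinal.{u}} (hξ : ξ < μ.ord) : ∃ β ∈ B, ξ < β := by
  by_contra! hbdd
  have hsucc : Order.succ ξ < μ.ord := (Cardinal.isSuccLimit_ord hμ).succ_lt hξ
  have : #B ≤ #(Iio (Order.succ ξ)) := by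
    rw [Order.Iio_succ]
    exact Cardinal.mk_le_mk_of_subset hbdd
  rw [Cardinal.mk_Iio_ordinal, hB, Cardinal.lift_le] at this
  exact (Cardinal.lt_ord.mp hsucc).not_ge this

theorem exists_lt_ord_ne_of_mem_branches {θ : Cardinal.{0}}
    {T : Set (Ordinal × (Ordinal → Ordinal))} {b b' : Ordinal → Ordinal}
    (hb : b ∈ branches θ T) (hb' : b' ∈ branches θ T) (hne : b ≠ b') :
    ∃ ξ < θ.ord, b ξ ≠ b' ξ := by
  obtain ⟨ξ, hξ⟩ := Function.ne_iff.mp hne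
  refine ⟨ξ, lt_of_not_ge fun hle => hξ ?_, hξ⟩
  rw [hb.1, hb'.1, restrict_apply_of_le hle, restrict_apply_of_le hle]

theorem exists_mem_restrict_ne_of_mem_branches {θ : Cardinal.{0}} (hθ : ℵ₀ ≤ θ)
    {T : Set (Ordinal × (Ordinal → Ordinal))} {b b' : Ordinal → Ordinal}
    (hb : b ∈ branches θ T) (hb' : b' ∈ branches θ T) (hne : b ≠ b') {B : Set Ordinal}
    (hB : #B = Cardinal.lift.{1} θ) : ∃ β ∈ B, restrict b β ≠ restrict b' β := by
  obtain ⟨ξ, hξθ, hξ⟩ := exists_lt_ord_ne_of_mem_branches hb hb' hne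
  obtain ⟨β, hβB, hξβ⟩ := exists_mem_gt_of_mk_eq hθ hB hξθ
  refine ⟨β, hβB, fun h => hξ ?_⟩
  rw [← restrict_apply_of_lt (t := b) hξβ, ← restrict_apply_of_lt (t := b') hξβ, h]

theorem exists_injOn_lt_ord_family {ι : Type*} {X : Type u} {s : ι → Set X} {I : Set ι}
    {κ : Cardinal.{v}} (hκ : κ ≠ 0) (hs : ∀ i ∈ I, Cardinal.lift.{v} #(s i) ≤ Cardinal.lift.{u} κ) :
    ∃ code : ι → X → Ordinal.{v}, (∀ i ∈ I, InjOn (code i) (s i)) ∧ ∀ i x, code i x < κ.ord := by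
  classical
  have (i : ι) : ∃ code : X → Ordinal.{v}, (i ∈ I → InjOn code (s i)) ∧ ∀ x, code x < κ.ord := by
    by_cases hi : i ∈ I
    · obtain ⟨code, hinj, hlt⟩ := exists_injOn_lt_ord hκ (hs i hi)
      exact ⟨code, fun _ => hinj, hlt⟩
    · exact ⟨fun _ => 0, fun h => absurd h hi,
        fun _ => Cardinal.ord_pos.mpr (pos_iff_ne_zero.mpr hκ)⟩
  choose code hinj hlt using this
  exact ⟨code, hinj, hlt⟩

theorem kurepa_tree_negative_polarized_relation_successor_general (κ : Cardinal.{0})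
    (hκ : ℵ₀ ≤ κ)
    (T : Set (Ordinal × (Ordinal → Ordinal)))
    (hlev : ∀ β < (Order.succ κ).ord, #(level T β) ≤ Cardinal.lift.{1} κ)
    (hbr : Cardinal.lift.{1} (Order.succ (Order.succ κ)) ≤ #(branches (Order.succ κ) T)) :
    ∃ c : Ordinal → Ordinal → Ordinal, (∀ α β : Ordinal, c α β < κ.ord) ∧
      ∀ A : Set Ordinal, A ⊆ Set.Iio (Order.succ (Order.succ κ)).ord → #A = 2 →
      ∀ B : Set Ordinal, B ⊆ Set.Iio (Order.succ κ).ord →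
        #B = Cardinal.lift.{1} (Order.succ κ) →
      ¬ ∃ i : Ordinal, ∀ α ∈ A, ∀ β ∈ B, c α β = i := by
  obtain ⟨f, hf_inj, hf_branch⟩ :=
    exists_injOn_mapsTo_Iio_ord (μ := Order.succ (Order.succ κ)) (s := branches (Order.succ κ) T)
      (by rwa [Cardinal.lift_uzero])
  obtain ⟨code, hcode_inj, hcode_lt⟩ :=
    exists_injOn_lt_ord_family (s := level T) (I := Iio (Order.succ κ).ord)
      (aleph0_pos.trans_le hκ).ne' (by simpa using hlev)
  refine ⟨fun α β => code β (restrict (f α) β), fun α β => hcode_lt _ _, ?_⟩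
  rintro A hA hA2 B hB hBcard ⟨i, hi⟩
  obtain ⟨a, ha, a', ha', hne⟩ : A.Nontrivial := by
    rw [← Set.nontrivial_coe_sort, ← Cardinal.one_lt_iff_nontrivial, hA2]
    exact one_lt_two
  have hb := hf_branch (hA ha)
  have hb' := hf_branch (hA ha')
  obtain ⟨β, hβB, hβ⟩ := exists_mem_restrict_ne_of_mem_branches (hκ.trans (Order.le_succ κ))
    hb hb' (hf_inj.ne (hA ha) (hA ha') hne) hBcard
  exact hβ <| hcode_inj β (hB hβB) (hb.2 β (hB hβB)) (hb'.2 β (hB hβB))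
    ((hi a ha β hβB).trans (hi a' ha' β hβB).symm)

/-- If there is a Kurepa tree on `κ⁺` (levels of size `≤ κ`, at least
`κ⁺⁺` branches), then the polarized relation `(κ⁺⁺, κ⁺) → (2, κ⁺)_κ` fails. -/
theorem kurepa_tree_negative_polarized_relation_successor (κ : Cardinal.{0})
    (hκ : ℵ₀ ≤ κ)
    (T : Set (Ordinal × (Ordinal → Ordinal)))
    (hT : IsKappaTree (Order.succ κ) T)
    (hlev : ∀ β < (Order.succ κ).ord, #(level T β) ≤ Cardinal.lift.{1} κ)
    (hbr : Cardinal.lift.{1} (Order.succ (Order.succ κ)) ≤ #(branches (Order.succ κ) T)) :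
    ∃ c : Ordinal → Ordinal → Ordinal, (∀ α β : Ordinal, c α β < κ.ord) ∧
      ∀ A : Set Ordinal, A ⊆ Set.Iio (Order.succ (Order.succ κ)).ord → #A = 2 →
      ∀ B : Set Ordinal, B ⊆ Set.Iio (Order.succ κ).ord →
        #B = Cardinal.lift.{1} (Order.succ κ) →
      ¬ ∃ i : Ordinal, ∀ α ∈ A, ∀ β ∈ B, c α β = i :=
  kurepa_tree_negative_polarized_relation_successor_general κ hκ T hlev hbr

end GK
end
end

section
/- Let κ be a strongly inaccessible cardinal, let S ⊆ {δ < κ : cf(δ) = ω} be stationary in κ, and suppose there exists a slim S-Kurepa tree on κ. Then there is a coloring c : κ⁺ × S → ω such that there are no A ⊆ κ⁺ with |A| = κ and stationary S' ⊆ S for which the restriction of c to A × S' is constant. -/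
open Cardinal Set

noncomputable section

namespace GK

lemma closure_club (κ : Cardinal.{0}) (hreg : κ.IsRegular) (hℵ : ℵ₀ < κ)
    (g : Ordinal → Ordinal) (hg : ∀ γ < κ.ord, g γ < κ.ord) :
    IsClubIn {δ | δ < κ.ord ∧ 0 < δ ∧ ∀ γ < δ, g γ < δ} κ.ord := by
  have hlim : Order.IsSuccLimit (κ.ord) := Cardinal.isSuccLimit_ord hreg.1
  refine ⟨fun δ hδ => hδ.1, ?_, ?_⟩
  · intro α hα
    set d : ℕ → Ordinal := fun k => Nat.rec (α + 1)
      (fun _ prev => max (Ordinal.blsub prev (fun γ _ => g γ)) prev + 1) k with hd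
    have hdsucc : ∀ k, d (k+1) = max (Ordinal.blsub (d k) (fun γ _ => g γ)) (d k) + 1 :=
      fun k => rfl
    have hdκ : ∀ k, d k < κ.ord := by
      intro k; induction k with
      | zero =>
        have : α + 1 = Order.succ α := Ordinal.add_one_eq_succ α
        show α + 1 < κ.ord
        rw [this]; exact hlim.succ_lt hα
      | succ k ih =>
        have hb : Ordinal.blsub (d k) (fun γ _ => g γ) < κ.ord :=
          Ordinal.blsub_lt_ord (by rw [hreg.cof_eq]; exact Cardinal.lt_ord.1 ih)
            (fun γ hγ => hg γ (hγ.trans ih))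
        rw [hdsucc, Ordinal.add_one_eq_succ]
        exact hlim.succ_lt (max_lt hb ih)
    have hmono : ∀ k, d k < d (k+1) := fun k => by
      rw [hdsucc, Ordinal.add_one_eq_succ]
      exact (le_max_right _ _).trans_lt (Order.lt_succ _)
    have hδκ : (⨆ k, d k) < κ.ord :=
      Ordinal.iSup_lt_ord (by rw [hreg.cof_eq]; simpa using hℵ) hdκ
    refine ⟨⨆ k, d k, ⟨hδκ, ?_, ?_⟩, ?_⟩
    · have : α + 1 ≤ ⨆ k, d k := Ordinal.le_iSup d 0
      exact lt_of_lt_of_le ((zero_le (a := α)).trans_lt (by rw [Ordinal.add_one_eq_succ]; exact Order.lt_succ _)) this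
    · intro γ hγ
      obtain ⟨k, hk⟩ := (Ordinal.lt_iSup_iff).1 hγ
      have h1 : g γ < Ordinal.blsub (d k) (fun γ _ => g γ) := Ordinal.lt_blsub _ γ hk
      have h2 : d (k+1) ≤ ⨆ k, d k := Ordinal.le_iSup d (k+1)
      refine lt_of_lt_of_le ?_ h2
      rw [hdsucc, Ordinal.add_one_eq_succ]
      exact ((h1.trans_le (le_max_left _ _)).trans (Order.lt_succ _))
    · have : α + 1 ≤ ⨆ k, d k := Ordinal.le_iSup d 0
      have h2 : α < α + 1 := by
        rw [Ordinal.add_one_eq_succ]; exact Order.lt_succ _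
      exact h2.trans_le this
  · intro δ hδκ hδ0 hcl
    refine ⟨hδκ, hδ0, ?_⟩
    intro γ hγ
    obtain ⟨β, hβC, hγβ, hβδ⟩ := hcl γ hγ
    exact lt_trans (hβC.2.2 γ hγβ) hβδ


lemma branch_zero {κ : Cardinal.{0}} {T : Set (Ordinal × (Ordinal → Ordinal))}
    {t : Ordinal → Ordinal} (ht : t ∈ branches κ T) {x : Ordinal} (hx : κ.ord ≤ x) :
    t x = 0 := by
  conv_lhs => rw [ht.1]
  simp [restrict, not_lt.2 hx]

/-- If `κ` is strongly inaccessible, `S ⊆ S^κ_ω` is stationary and there is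
a slim `S`-Kurepa tree on `κ`, then there is a coloring `c : κ⁺ × S → ω` with no
monochromatic product `A × S'` with `|A| = κ` and `S' ⊆ S` stationary. -/
theorem slim_S_kurepa_tree_negative_partition (κ : Cardinal.{0})
    (hκ : κ.IsInaccessible)
    (S : Set Ordinal) (hSsub : S ⊆ {δ : Ordinal | δ < κ.ord ∧ δ.cof = ℵ₀})
    (hSstat : IsStationaryIn S κ.ord)
    (T : Set (Ordinal × (Ordinal → Ordinal))) (hT : IsKappaTree κ T)
    (hslim : ∀ α ∈ S, #(level T α) ≤ Cardinal.lift.{1} α.card)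
    (hbr : Cardinal.lift.{1} (Order.succ κ) ≤ #(branches κ T)) :
    ∃ c : Ordinal → Ordinal → ℕ,
      ¬ ∃ (A S' : Set Ordinal) (n : ℕ),
        A ⊆ Set.Iio (Order.succ κ).ord ∧ #A = Cardinal.lift.{1} κ ∧
        S' ⊆ S ∧ IsStationaryIn S' κ.ord ∧
        ∀ α ∈ A, ∀ β ∈ S', c α β = n := by
  classical
  obtain ⟨hℵ, hreg, hstrong⟩ := hκ
  -- pick κ⁺ many distinct branches
  obtain ⟨j⟩ : Nonempty (↥(Set.Iio (Order.succ κ).ord) ↪ ↥(branches κ T)) := by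
    rw [← Cardinal.le_def, Ordinal.mk_Iio_ordinal, Cardinal.card_ord]
    exact hbr
  set b : Ordinal → (Ordinal → Ordinal) := fun α =>
    if h : α < (Order.succ κ).ord then (j ⟨α, h⟩ : Ordinal → Ordinal) else fun _ => 0 with hbdef
  have hbmem : ∀ {α : Ordinal}, α < (Order.succ κ).ord → b α ∈ branches κ T := by
    intro α h
    simp only [hbdef, dif_pos h]
    exact (j ⟨α, h⟩).2
  have hbinj : ∀ {α β : Ordinal}, α < (Order.succ κ).ord → β < (Order.succ κ).ord →
      b α = b β → α = β := by
    intro α β hα hβ h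
    simp only [hbdef, dif_pos hα, dif_pos hβ] at h
    have := j.injective (Subtype.ext h)
    exact congrArg Subtype.val this
  -- cofinal ω-sequences
  have hsex : ∀ δ ∈ S, ∃ s : ℕ → Ordinal, (∀ m, s m < δ) ∧ (∀ x < δ, ∃ m, x ≤ s m) := by
    intro δ hδ
    obtain ⟨hδκ, hcof⟩ := hSsub hδ
    obtain ⟨ι, f, hlsub, hι⟩ := Ordinal.exists_lsub_cof δ
    rw [hcof] at hι
    obtain ⟨φ⟩ : Nonempty (ℕ ≃ ι) := by
      rw [← Cardinal.eq, hι, Cardinal.mk_nat]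
    refine ⟨fun m => f (φ m), fun m => ?_, fun x hx => ?_⟩
    · rw [← hlsub]; exact Ordinal.lt_lsub f _
    · rw [← hlsub] at hx
      obtain ⟨i, hi⟩ := Ordinal.lt_lsub_iff.1 hx
      exact ⟨φ.symm i, by simpa using hi⟩
  choose! s hs1 hs2 using hsex
  -- injections of levels into initial segments
  have heex : ∀ δ ∈ S, ∃ e : (Ordinal → Ordinal) → Ordinal,
      (∀ t ∈ level T δ, e t < δ) ∧ Set.InjOn e (level T δ) := by
    intro δ hδ
    have h1 : #(level T δ) ≤ #(Set.Iio δ) := by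
      rw [Ordinal.mk_Iio_ordinal]; exact hslim δ hδ
    obtain ⟨i⟩ := (Cardinal.le_def _ _).1 h1
    refine ⟨fun t => if h : t ∈ level T δ then (i ⟨t, h⟩ : Ordinal) else 0, ?_, ?_⟩
    · intro t ht; simp only [dif_pos ht]; exact (i ⟨t, ht⟩).2
    · intro t ht u hu h
      simp only [dif_pos ht, dif_pos hu] at h
      exact congrArg Subtype.val (i.injective (Subtype.ext h))
  choose! e he1 he2 using heex
  -- the coloring
  refine ⟨fun α δ => sInf {m | e δ (restrict (b α) δ) < s δ m}, ?_⟩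
  rintro ⟨A, S', n, hA, hAcard, hS'S, hS'stat, hmono⟩
  -- basic facts
  have hres : ∀ {α : Ordinal}, α < (Order.succ κ).ord → ∀ {δ : Ordinal}, δ < κ.ord →
      restrict (b α) δ ∈ level T δ := by
    intro α hα δ hδ
    exact (hbmem hα).2 δ hδ
  have hlimS : ∀ δ ∈ S, Order.IsSuccLimit δ := by
    intro δ hδ
    exact Ordinal.aleph0_le_cof.1 (le_of_eq (hSsub hδ).2.symm)
  have hcval : ∀ {α : Ordinal}, α < (Order.succ κ).ord → ∀ {δ : Ordinal}, δ ∈ S →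
      e δ (restrict (b α) δ) < s δ (sInf {m | e δ (restrict (b α) δ) < s δ m}) := by
    intro α hα δ hδ
    have hδκ : δ < κ.ord := (hSsub hδ).1
    have hlt : e δ (restrict (b α) δ) < δ := he1 δ hδ _ (hres hα hδκ)
    have hlt1 : e δ (restrict (b α) δ) + 1 < δ := by
      rw [Ordinal.add_one_eq_succ]; exact (hlimS δ hδ).succ_lt hlt
    obtain ⟨m, hm⟩ := hs2 δ hδ _ hlt1
    have hne : {m | e δ (restrict (b α) δ) < s δ m}.Nonempty :=
      ⟨m, lt_of_lt_of_le (by rw [Ordinal.add_one_eq_succ]; exact Order.lt_succ _) hm⟩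
    exact Nat.sInf_mem hne
  -- the "regressive" function δ ↦ n-th element of the ladder at δ
  -- Fodor-lite: some γ works for unboundedly many δ ∈ S'
  have hFodor : ∃ γ < κ.ord, ∀ β < κ.ord, ∃ δ ∈ S', β < δ ∧ s δ n < γ := by
    by_contra hcon
    push_neg at hcon
    choose! g hg1 hg2 using hcon
    obtain ⟨δ₀, hδ₀S', hδ₀C⟩ := hS'stat _ (closure_club κ ⟨hℵ.le, hreg⟩ hℵ g hg1)
    have hδ₀S : δ₀ ∈ S := hS'S hδ₀S'
    have hδ₀lim := hlimS δ₀ hδ₀S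
    have hfδ : s δ₀ n < δ₀ := hs1 δ₀ hδ₀S n
    have hγκ : s δ₀ n + 1 < δ₀ := by
      rw [Ordinal.add_one_eq_succ]; exact hδ₀lim.succ_lt hfδ
    have hglt : g (s δ₀ n + 1) < δ₀ := hδ₀C.2.2 _ hγκ
    have := hg2 (s δ₀ n + 1) (hγκ.trans hδ₀C.1) δ₀ hδ₀S' hglt
    rw [Ordinal.add_one_eq_succ] at this
    exact (Order.lt_succ (s δ₀ n)).not_ge this
  obtain ⟨γ, hγκ, hγub⟩ := hFodor
  -- enlarge γ to be infinite
  set γ' := max γ Ordinal.omega0 with hγ'def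
  have hγ'κ : γ' < κ.ord := by
    apply max_lt hγκ
    rw [Cardinal.lt_ord, Ordinal.card_omega0]
    exact hℵ
  set θ := γ'.card with hθdef
  have hθκ : θ < κ := Cardinal.lt_ord.1 hγ'κ
  have hsuccθ : Order.succ θ < κ :=
    lt_of_le_of_lt (Order.succ_le_of_lt (Cardinal.cantor θ)) (hstrong hθκ)
  -- a family of succ θ many indices into A
  set ι := ((Order.succ θ).ord).ToType with hιdef
  have hιcard : #ι = Order.succ θ := by rw [hιdef, Cardinal.mk_toType, Cardinal.card_ord]
  obtain ⟨ψ⟩ : Nonempty (ι ↪ ↥A) := by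
    rw [← Cardinal.lift_mk_le', hιcard, hAcard]
    simpa using Cardinal.lift_le.{1}.2 hsuccθ.le
  have hψA : ∀ i, (ψ i : Ordinal) < (Order.succ κ).ord := fun i => hA (ψ i).2
  have hbne : ∀ {i k : ι}, i ≠ k → b ↑(ψ i) ≠ b ↑(ψ k) := by
    intro i k hik hcontra
    exact hik (ψ.injective (Subtype.ext (hbinj (hψA i) (hψA k) hcontra)))
  -- splitting points
  set ξ : ι × ι → Ordinal := fun p => sInf {x | b ↑(ψ p.1) x ≠ b ↑(ψ p.2) x} with hξdef
  have hξκ : ∀ p, ξ p < κ.ord := by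
    intro p
    by_cases hne : {x | b ↑(ψ p.1) x ≠ b ↑(ψ p.2) x}.Nonempty
    · have hmem := csInf_mem hne
      by_contra hge
      exact hmem (by
        rw [branch_zero (hbmem (hψA p.1)) (not_lt.1 hge),
          branch_zero (hbmem (hψA p.2)) (not_lt.1 hge)])
    · rw [Set.not_nonempty_iff_eq_empty] at hne
      rw [hξdef]
      simp only [hne, Ordinal.sInf_empty]
      rw [Cardinal.lt_ord]
      simpa using aleph0_pos.trans hℵ
  have hΓκ : (⨆ p, ξ p) < κ.ord := by
    apply Ordinal.iSup_lt_ord _ hξκ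
    rw [(show κ.IsRegular from ⟨hℵ.le, hreg⟩).cof_eq]
    have hpc : #(ι × ι) = Order.succ θ * Order.succ θ := by
      rw [Cardinal.mk_prod, hιcard]; simp
    rw [hpc]
    exact Cardinal.mul_lt_of_lt hℵ.le hsuccθ hsuccθ
  -- pick δ ∈ S' above all splitting points with small ladder value
  obtain ⟨δ, hδS', hΓδ, hfδγ⟩ := hγub _ hΓκ
  have hδS : δ ∈ S := hS'S hδS'
  have hδκ : δ < κ.ord := (hSsub hδS).1
  -- the injection witnessing succ θ ≤ θ
  set m : ι → Ordinal := fun i => e δ (restrict (b ↑(ψ i)) δ) with hmdef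
  have hmlt : ∀ i, m i < γ' := by
    intro i
    have h1 := hcval (hψA i) hδS
    have h2 : sInf {m | e δ (restrict (b ↑(ψ i)) δ) < s δ m} = n := hmono _ (ψ i).2 δ hδS'
    rw [h2] at h1
    exact (h1.trans hfδγ).trans_le (le_max_left _ _)
  have hminj : Function.Injective m := by
    intro i k h
    by_contra hik
    have hrS : restrict (b ↑(ψ i)) δ = restrict (b ↑(ψ k)) δ :=
      he2 δ hδS (hres (hψA i) hδκ) (hres (hψA k) hδκ) h
    have hne : {x | b ↑(ψ i) x ≠ b ↑(ψ k) x}.Nonempty := Function.ne_iff.1 (hbne hik)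
    have hmem : ξ (i, k) ∈ {x | b ↑(ψ i) x ≠ b ↑(ψ k) x} := csInf_mem hne
    have hlt : ξ (i, k) < δ := lt_of_le_of_lt (Ordinal.le_iSup ξ (i, k)) hΓδ
    have := congrFun hrS (ξ (i, k))
    simp only [restrict, if_pos hlt] at this
    exact hmem this
  have hfinal : Cardinal.lift.{1} #ι ≤ #(Set.Iio γ') := by
    have emb : ι ↪ ↥(Set.Iio γ') :=
      ⟨fun i => ⟨m i, hmlt i⟩, fun i k hik => hminj (congrArg Subtype.val hik)⟩
    have := Cardinal.lift_mk_le'.2 ⟨emb⟩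
    simpa using this
  rw [hιcard, Ordinal.mk_Iio_ordinal] at hfinal
  exact (Order.lt_succ θ).not_ge (Cardinal.lift_le.1 hfinal)

end GK
end
end

section
/- Let κ be an uncountable cardinal, let 𝒰 be a σ-complete ultrafilter over κ satisfying the Galvin property Gal(𝒰, κ, κ⁺), and let S ∈ 𝒰. Then for every coloring c : κ⁺ × S → ω there exist a set A ⊆ κ⁺ with |A| = κ and a set S' ⊆ S with S' ∈ 𝒰 such that c is constant on A × S'. -/
open Cardinal Set

noncomputable section

namespace GK

-- auxiliary: for every γ there is a color n with {β ∈ S : c γ β = n} ∈ U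
lemma exists_color (κ : Cardinal.{0}) (U : Set (Set Ordinal))
    (hU : IsUltrafilterOn κ U) (hσ : SigmaComplete U)
    (S : Set Ordinal) (hS : S ∈ U) (c : Ordinal.{0} → Ordinal.{0} → ℕ) (γ : Ordinal.{0}) :
    ∃ n : ℕ, {β | β ∈ S ∧ c γ β = n} ∈ U := by
  by_contra h
  push_neg at h
  set T : ℕ → Set Ordinal := fun n => {β | β ∈ S ∧ c γ β = n} with hT
  have hsub : ∀ n, T n ⊆ Set.Iio κ.ord := fun n β hβ => hU.1 S hS hβ.1
  have hD : ∀ n, Set.Iio κ.ord \ T n ∈ U := by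
    intro n
    rcases hU.2.2.2.2.2 (T n) (hsub n) with h1 | h2
    · exact absurd h1 (h n)
    · exact h2
  have hcap : (⋂ n, Set.Iio κ.ord \ T n) ∈ U := hσ _ hD
  have hempty : S ∩ (⋂ n, Set.Iio κ.ord \ T n) = ∅ := by
    ext β
    simp only [Set.mem_inter_iff, Set.mem_iInter, Set.mem_diff, Set.mem_empty_iff_false,
      iff_false, not_and, not_forall]
    intro hβS
    exact ⟨c γ β, fun _ h' => h' ⟨hβS, rfl⟩⟩
  have := hU.2.2.2.2.1 S _ hS hcap
  rw [hempty] at this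
  exact hU.2.2.1 this

/-- If `U` is a σ-complete ultrafilter over `κ` satisfying the Galvin
property, `S ∈ U`, then every coloring `c : κ⁺ × S → ω` has a monochromatic product
`A × S'` with `|A| = κ` and `S' ⊆ S`, `S' ∈ U`. -/
theorem galvin_property_gives_monochromatic_product (κ : Cardinal.{0})
    (hκ : ℵ₀ < κ)
    (U : Set (Set Ordinal)) (hU : IsUltrafilterOn κ U) (hσ : SigmaComplete U)
    (hGal : Galvin κ U)
    (S : Set Ordinal) (hS : S ∈ U)
    (c : Ordinal → Ordinal → ℕ) :
    ∃ (A S' : Set Ordinal) (n : ℕ),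
      A ⊆ Set.Iio (Order.succ κ).ord ∧ #A = Cardinal.lift.{1} κ ∧
      S' ⊆ S ∧ S' ∈ U ∧
      ∀ α ∈ A, ∀ β ∈ S', c α β = n := by
  choose nc hnc using exists_color κ U hU hσ S hS c
  set O : Set Ordinal := Set.Iio (Order.succ κ).ord with hO
  set B : ℕ → Set Ordinal := fun n => {γ ∈ O | nc γ = n} with hB
  have hOcard : #O = Cardinal.lift.{1} (Order.succ κ) := by
    rw [hO, Ordinal.mk_Iio_ordinal, Cardinal.card_ord]
  have hunion : (⋃ n, B n) = O := by
    ext γ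
    simp only [Set.mem_iUnion, hB, Set.mem_sep_iff]
    exact ⟨fun ⟨n, h, _⟩ => h, fun h => ⟨nc γ, h, rfl⟩⟩
  -- pigeonhole
  have hBn : ∃ n, #(B n) = Cardinal.lift.{1} (Order.succ κ) := by
    by_contra hcon
    push_neg at hcon
    have hsmall : ∀ n, #(B n) ≤ Cardinal.lift.{1} κ := by
      intro n
      have hle : #(B n) ≤ Cardinal.lift.{1} (Order.succ κ) := by
        rw [← hOcard]
        exact Cardinal.mk_le_mk_of_subset (fun γ hγ => hγ.1)
      have hlt : #(B n) < Cardinal.lift.{1} (Order.succ κ) := lt_of_le_of_ne hle (hcon n)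
      rw [Cardinal.lift_succ] at hlt
      exact Order.lt_succ_iff.mp hlt
    have hbig : #O ≤ Cardinal.lift.{1} κ := by
      rw [← hunion]
      calc #(⋃ n, B n) = Cardinal.lift.{0} #(⋃ n, B n) := (Cardinal.lift_id'.{0,1} _).symm
        _ ≤ Cardinal.lift.{1} #ℕ * ⨆ n, Cardinal.lift.{0} #(B n) :=
            Cardinal.mk_iUnion_le_lift _
        _ ≤ ℵ₀ * Cardinal.lift.{1} κ := by
            apply mul_le_mul'
            · simp
            · exact ciSup_le' fun n => by simpa using hsmall n
        _ = Cardinal.lift.{1} κ :=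
            Cardinal.aleph0_mul_eq (by rw [Cardinal.aleph0_le_lift]; exact hκ.le)
    rw [hOcard, Cardinal.lift_succ] at hbig
    exact absurd hbig (not_le_of_gt (Order.lt_succ _))
  obtain ⟨n, hn⟩ := hBn
  obtain ⟨g⟩ : Nonempty (↥O ≃ ↥(B n)) := Cardinal.eq.mp (hOcard.trans hn.symm)
  set f : Ordinal → Ordinal := fun α => if h : α ∈ O then ((g ⟨α, h⟩ : ↥(B n)) : Ordinal) else 0
    with hf
  have hfB : ∀ α (h : α ∈ O), f α ∈ B n := by
    intro α h
    simp only [hf, dif_pos h]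
    exact (g ⟨α, h⟩).2
  set C' : Ordinal → Set Ordinal := fun α =>
    if α ∈ O then {β | β ∈ S ∧ c (f α) β = n} else S with hC'
  have hC'U : ∀ α < (Order.succ κ).ord, C' α ∈ U := by
    intro α hα
    have hαO : α ∈ O := hα
    have hcol : nc (f α) = n := (hfB α hαO).2
    simp only [hC', if_pos hαO]
    rw [← hcol]
    exact hnc (f α)
  obtain ⟨A, hAsub, hAcard, hAint⟩ := hGal C' hC'U
  have hAO : ∀ α ∈ A, α ∈ O := fun α h => hAsub h
  have hAne : A.Nonempty := by
    rw [← Set.nonempty_coe_sort, ← Cardinal.mk_ne_zero_iff, hAcard]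
    simp only [ne_eq, Cardinal.lift_eq_zero]
    exact fun h => by simp [h] at hκ
  have hinj : Set.InjOn f A := by
    intro a ha b hb hab
    have haO := hAO a ha
    have hbO := hAO b hb
    simp only [hf, dif_pos haO, dif_pos hbO] at hab
    have := g.injective (Subtype.coe_injective hab)
    exact congrArg Subtype.val this
  refine ⟨f '' A, ⋂ α ∈ A, C' α, n, ?_, ?_, ?_, hAint, ?_⟩
  · rintro _ ⟨α, hα, rfl⟩
    exact (hfB α (hAO α hα)).1
  · rw [Cardinal.mk_image_eq_of_injOn f A hinj, hAcard]
  · obtain ⟨α₀, hα₀⟩ := hAne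
    intro β hβ
    have hβ' : β ∈ C' α₀ := by
      simp only [Set.mem_iInter] at hβ
      exact hβ α₀ hα₀
    rw [hC'] at hβ'
    simp only [if_pos (hAO α₀ hα₀)] at hβ'
    exact hβ'.1
  · rintro _ ⟨α, hα, rfl⟩ β hβ
    simp only [Set.mem_iInter] at hβ
    have hβ' := hβ α hα
    simp only [hC', if_pos (hAO α hα)] at hβ'
    exact hβ'.2


end GK
end
end

section
/- Let κ be a strongly inaccessible cardinal, let S ⊆ {δ < κ : cf(δ) = ω} be stationary in κ, and suppose there exists a slim S-Kurepa tree on κ. Then for every σ-complete ultrafilter 𝒰 over κ which contains every closed unbounded subset of κ and contains S, the Galvin property Gal(𝒰, κ, κ⁺) fails. -/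
open Cardinal Set

noncomputable section

namespace GK

lemma isClubIn_tail {κ : Cardinal.{0}} (hκ : ℵ₀ ≤ κ) {γ : Ordinal} (hγ : γ < κ.ord) :
    IsClubIn {β | γ < β ∧ β < κ.ord} κ.ord := by
  have hlim := Cardinal.isSuccLimit_ord hκ
  refine ⟨fun β hβ => hβ.2, fun α hα => ?_, fun δ hδ hδ0 hcl => ?_⟩
  · exact ⟨Order.succ (max γ α),
      ⟨lt_of_le_of_lt (le_max_left _ _) (Order.lt_succ _), hlim.succ_lt (max_lt hγ hα)⟩,
      lt_of_le_of_lt (le_max_right _ _) (Order.lt_succ _)⟩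
  · obtain ⟨β, hβC, _, hβδ⟩ := hcl 0 hδ0
    exact ⟨lt_trans hβC.1 hβδ, hδ⟩

lemma isClubIn_closure {κ : Cardinal.{0}} (hreg : κ.IsRegular) (hℵ : ℵ₀ < κ)
    (s : Ordinal → Ordinal) (hs : ∀ γ, γ < κ.ord → s γ < κ.ord) :
    IsClubIn {δ | δ < κ.ord ∧ 0 < δ ∧ ∀ γ < δ, s γ < δ} κ.ord := by
  have hlim := Cardinal.isSuccLimit_ord hreg.aleph0_le
  refine ⟨fun β hβ => hβ.1, fun α hα => ?_, fun δ hδ hδ0 hcl => ?_⟩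
  · set F : Ordinal → Ordinal := fun x =>
      if h : x < κ.ord then
        Order.succ (max (Ordinal.bsup x (fun γ _ => Order.succ (s γ))) x)
      else 0 with hF
    have hFlt : ∀ x, x < κ.ord → F x < κ.ord := by
      intro x hx
      rw [hF]
      simp only [dif_pos hx]
      refine hlim.succ_lt (max_lt ?_ hx)
      refine Cardinal.bsup_lt_ord_of_isRegular hreg (Cardinal.lt_ord.mp hx) ?_
      intro i hi
      exact hlim.succ_lt (hs i (hi.trans hx))
    have hFgt : ∀ x, x < κ.ord → x < F x := by
      intro x hx
      rw [hF]; simp only [dif_pos hx]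
      exact lt_of_le_of_lt (le_max_right _ _) (Order.lt_succ _)
    have hFcl : ∀ x, x < κ.ord → ∀ γ < x, s γ < F x := by
      intro x hx γ hγ
      rw [hF]; simp only [dif_pos hx]
      have h1 : s γ < Ordinal.bsup x (fun γ _ => Order.succ (s γ)) :=
        lt_of_lt_of_le (Order.lt_succ (s γ)) (Ordinal.le_bsup (fun γ _ => Order.succ (s γ)) γ hγ)
      exact lt_of_lt_of_le h1
        (le_of_lt (lt_of_le_of_lt (le_max_left _ _) (Order.lt_succ _)))
    set a : ℕ → Ordinal := fun k => Nat.rec (Order.succ α) (fun _ ih => F ih) k with ha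
    have haS : ∀ k, a (k+1) = F (a k) := fun k => rfl
    have halt : ∀ k, a k < κ.ord := by
      intro k; induction k with
      | zero => exact hlim.succ_lt hα
      | succ k ih => rw [haS]; exact hFlt _ ih
    set δ := iSup a with hδdef
    have hδlt : δ < κ.ord := by
      refine Cardinal.iSup_lt_ord_of_isRegular hreg ?_ halt
      rw [Cardinal.mk_nat]; exact hℵ
    have hale : ∀ k, a k ≤ δ := fun k => Ordinal.le_iSup a k
    refine ⟨δ, ⟨hδlt, ?_, ?_⟩, ?_⟩
    · exact lt_of_lt_of_le (lt_of_le_of_lt (zero_le (a := α)) (Order.lt_succ α)) (hale 0)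
    · intro γ hγ
      obtain ⟨k, hk⟩ := Ordinal.lt_iSup_iff.mp hγ
      exact lt_of_lt_of_le (hFcl _ (halt k) γ hk) ((haS k) ▸ hale (k+1))
    · exact lt_of_lt_of_le (Order.lt_succ α) (hale 0)
  · refine ⟨hδ, hδ0, ?_⟩
    intro γ hγ
    obtain ⟨β, hβC, hγβ, hβδ⟩ := hcl γ hγ
    exact lt_trans (hβC.2.2 γ hγβ) hβδ

/-- If `κ` is strongly inaccessible, `S ⊆ S^κ_ω` is stationary and there is
a slim `S`-Kurepa tree on `κ`, then every σ-complete ultrafilter over `κ` extending the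
club filter and containing `S` fails the Galvin property. -/
theorem slim_S_kurepa_tree_galvin_fails (κ : Cardinal.{0})
    (hκ : κ.IsInaccessible)
    (S : Set Ordinal) (hSsub : S ⊆ {δ : Ordinal | δ < κ.ord ∧ δ.cof = ℵ₀})
    (hSstat : IsStationaryIn S κ.ord)
    (T : Set (Ordinal × (Ordinal → Ordinal))) (hT : IsKappaTree κ T)
    (hslim : ∀ α ∈ S, #(level T α) ≤ Cardinal.lift.{1} α.card)
    (hbr : Cardinal.lift.{1} (Order.succ κ) ≤ #(branches κ T))
    (U : Set (Set Ordinal)) (hU : IsUltrafilterOn κ U) (hσ : SigmaComplete U)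
    (hclub : ∀ C : Set Ordinal, IsClubIn C κ.ord → C ∈ U) (hSU : S ∈ U) :
    ¬ Galvin κ U := by
  intro hGal
  classical
  have hreg := hκ.isRegular
  have hsl := hκ.isStrongLimit
  obtain ⟨hℵ, -, -⟩ := hκ
  obtain ⟨hUsub, hUuniv, hUemp, hUup, hUint, hUult⟩ := hU
  have holim : Order.IsSuccLimit κ.ord := Cardinal.isSuccLimit_ord hreg.aleph0_le
  -- basic U facts
  have hUne : ∀ {X : Set Ordinal}, X ∈ U → X.Nonempty := by
    intro X hX
    rcases Set.eq_empty_or_nonempty X with h | h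
    · exact absurd (h ▸ hX) hUemp
    · exact h
  have hUco : ∀ {X : Set Ordinal}, X ⊆ Set.Iio κ.ord → X ∉ U → (Set.Iio κ.ord \ X) ∈ U := by
    intro X hsub hnot
    exact (hUult X hsub).resolve_left hnot
  -- S facts
  have hSIio : ∀ {β}, β ∈ S → β < κ.ord := fun hβ => (hSsub hβ).1
  have hScof : ∀ {β}, β ∈ S → β.cof = ℵ₀ := fun hβ => (hSsub hβ).2
  have hSlimit : ∀ {β}, β ∈ S → Order.IsSuccLimit β := by
    intro β hβ
    exact Ordinal.aleph0_le_cof.mp (le_of_eq (hScof hβ).symm)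
  -- ladders
  have hlad : ∀ β ∈ S, ∃ ℓ : ℕ → Ordinal, (∀ n, ℓ n < β) ∧ (∀ γ < β, ∃ n, γ < ℓ n) := by
    intro β hβ
    obtain ⟨f, hf⟩ := Ordinal.exists_fundamental_sequence β
    have hω : β.cof.ord = Ordinal.omega0 := by rw [hScof hβ, Cardinal.ord_aleph0]
    have hnat : ∀ n : ℕ, (n : Ordinal) < β.cof.ord := by
      intro n; rw [hω]; exact Ordinal.nat_lt_omega0 n
    refine ⟨fun n => f n (hnat n), fun n => hf.lt (hnat n), ?_⟩
    intro γ hγ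
    have hsucc : Order.succ γ < β := (hSlimit hβ).succ_lt hγ
    rw [← hf.blsub_eq] at hsucc
    obtain ⟨i, hi, hle⟩ := Ordinal.lt_blsub_iff.mp hsucc
    have hiω : i < Ordinal.omega0 := by rw [← hω]; exact hi
    obtain ⟨n, rfl⟩ := Ordinal.lt_omega0.mp hiω
    exact ⟨n, lt_of_lt_of_le (Order.lt_succ γ) hle⟩
  choose! ℓfun hℓ1 hℓ2 using hlad
  -- codes
  have hcode : ∀ β ∈ S, ∃ c : (Ordinal → Ordinal) → Ordinal,
      (∀ t ∈ level T β, c t < β) ∧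
      (∀ t ∈ level T β, ∀ t' ∈ level T β, c t = c t' → t = t') := by
    intro β hβ
    have h1 : #(level T β) ≤ #(Set.Iio β) := by
      rw [Ordinal.mk_Iio_ordinal]; exact hslim β hβ
    obtain ⟨e⟩ := (Cardinal.le_def _ _).mp h1
    refine ⟨fun t => if h : t ∈ level T β then (e ⟨t, h⟩).val else 0, ?_, ?_⟩
    · intro t ht; simp only [dif_pos ht]; exact (e ⟨t, ht⟩).2
    · intro t ht t' ht' heq
      simp only [dif_pos ht, dif_pos ht'] at heq
      have := e.injective (Subtype.ext heq)
      exact congrArg Subtype.val this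
  choose! cfun hc1 hc2 using hcode
  -- branches enumeration
  have hbremb : ∃ G : ↥(Set.Iio (Order.succ κ).ord) → ↥(branches κ T), Function.Injective G := by
    have h1 : #(Set.Iio (Order.succ κ).ord) ≤ #(branches κ T) := by
      rw [Ordinal.mk_Iio_ordinal, Cardinal.card_ord]; exact hbr
    obtain ⟨e⟩ := (Cardinal.le_def _ _).mp h1
    exact ⟨e, e.injective⟩
  obtain ⟨G, hGinj⟩ := hbremb
  set bfn : Ordinal → (Ordinal → Ordinal) := fun a =>
    if h : a < (Order.succ κ).ord then (G ⟨a, h⟩).val else (fun _ => 0) with hbfn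
  have hbfn_mem : ∀ a, a < (Order.succ κ).ord → bfn a ∈ branches κ T := by
    intro a h; rw [hbfn]; simp only [dif_pos h]; exact (G ⟨a, h⟩).2
  have hbfn_inj : ∀ a, a < (Order.succ κ).ord → ∀ a', a' < (Order.succ κ).ord →
      bfn a = bfn a' → a = a' := by
    intro a h a' h' heq
    rw [hbfn] at heq; simp only [dif_pos h, dif_pos h'] at heq
    have := hGinj (Subtype.ext heq)
    exact congrArg Subtype.val this
  have htrc_mem : ∀ a, a < (Order.succ κ).ord → ∀ β, β < κ.ord →
      restrict (bfn a) β ∈ level T β := by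
    intro a ha β hβ
    exact (hbfn_mem a ha).2 β hβ
  -- codes of branches
  set cd : Ordinal → Ordinal → Ordinal := fun a β => cfun β (restrict (bfn a) β) with hcd
  have hcd_lt : ∀ a, a < (Order.succ κ).ord → ∀ β ∈ S, cd a β < β := by
    intro a ha β hβ
    exact hc1 β hβ _ (htrc_mem a ha β (hSIio hβ))
  -- σ-completeness: stabilize a ladder index for each branch
  have hnn : ∀ a, a < (Order.succ κ).ord →
      ∃ n : ℕ, {β | β ∈ S ∧ cd a β < ℓfun β n} ∈ U := by
    intro a ha
    by_contra hcon
    push_neg at hcon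
    have hcomp : ∀ n : ℕ, (Set.Iio κ.ord \ {β | β ∈ S ∧ cd a β < ℓfun β n}) ∈ U := by
      intro n
      exact hUco (fun β hβ => hSIio hβ.1) (hcon n)
    have hint := hσ _ hcomp
    obtain ⟨β, hβS, hβI⟩ := hUne (hUint _ _ hSU hint)
    obtain ⟨n, hn⟩ := hℓ2 β hβS _ (hcd_lt a ha β hβS)
    exact (Set.mem_iInter.mp hβI n).2 ⟨hβS, hn⟩
  set nn : Ordinal → ℕ := fun a =>
    if h : a < (Order.succ κ).ord then Classical.choose (hnn a h) else 0 with hnndef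
  have hnnU : ∀ a, a < (Order.succ κ).ord →
      {β | β ∈ S ∧ cd a β < ℓfun β (nn a)} ∈ U := by
    intro a h
    rw [hnndef]; simp only [dif_pos h]
    exact Classical.choose_spec (hnn a h)
  -- the Galvin family
  set C : Ordinal → Set Ordinal := fun a => {β | β ∈ S ∧ cd a β < ℓfun β (nn a)} with hCdef
  obtain ⟨A, hAsub, hAcard, hAint⟩ := hGal C (fun a ha => hnnU a ha)
  set X := ⋂ a ∈ A, C a with hXdef
  have hXU : X ∈ U := hAint
  have hAne : A.Nonempty := by
    rw [← Set.nonempty_coe_sort, ← Cardinal.mk_ne_zero_iff, hAcard]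
    simp only [ne_eq, Cardinal.lift_eq_zero]
    exact ne_of_gt (lt_of_lt_of_le Cardinal.aleph0_pos hreg.aleph0_le)
  obtain ⟨a₀, ha₀⟩ := hAne
  have hXS : X ⊆ S := by
    intro β hβ
    exact (Set.mem_iInter₂.mp hβ a₀ ha₀).1
  -- weak Fodor: for each n, the ladder value at stage n is bounded on an unbounded subset of X
  have hWF : ∀ n : ℕ, ∃ γ, γ < κ.ord ∧
      ∀ α, α < κ.ord → ∃ β, β ∈ X ∧ α < β ∧ ℓfun β n < γ := by
    intro n
    by_contra hcon
    push_neg at hcon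
    set s : Ordinal → Ordinal := fun γ =>
      if h : γ < κ.ord then Classical.choose (hcon γ h) else 0 with hsdef
    have hs_lt : ∀ γ, γ < κ.ord → s γ < κ.ord := by
      intro γ h; rw [hsdef]; simp only [dif_pos h]
      exact (Classical.choose_spec (hcon γ h)).1
    have hs_prop : ∀ γ, ∀ h : γ < κ.ord, ∀ β ∈ X, s γ < β → γ ≤ ℓfun β n := by
      intro γ h β hβ hlt
      have hspec := (Classical.choose_spec (hcon γ h)).2
      apply hspec β hβ
      rw [hsdef] at hlt; simpa only [dif_pos h] using hlt
    have hE : {δ | δ < κ.ord ∧ 0 < δ ∧ ∀ γ < δ, s γ < δ} ∈ U :=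
      hclub _ (isClubIn_closure hreg hℵ s hs_lt)
    obtain ⟨β, hβX, hβE⟩ := hUne (hUint _ _ hXU hE)
    have hβS : β ∈ S := hXS hβX
    have h1 : ℓfun β n < β := hℓ1 β hβS n
    have hγ0 : Order.succ (ℓfun β n) < β := (hSlimit hβS).succ_lt h1
    have hγ0o : Order.succ (ℓfun β n) < κ.ord := hγ0.trans (hSIio hβS)
    have hsγ0 : s (Order.succ (ℓfun β n)) < β := hβE.2.2 _ hγ0
    have := hs_prop _ hγ0o β hβX hsγ0
    exact absurd this (not_le.mpr (Order.lt_succ _))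
  choose γfun hγ1 hγ2 using hWF
  -- a uniform bound for the cardinalities of the γfun n
  set Γo : Ordinal := iSup (fun n : ℕ => ((γfun n).card).ord) with hΓo
  have hΓolt : Γo < κ.ord := by
    refine Cardinal.iSup_lt_ord_of_isRegular hreg ?_ ?_
    · rw [Cardinal.mk_nat]; exact hℵ
    · intro n
      exact Cardinal.ord_lt_ord.mpr (Cardinal.lt_ord.mp (hγ1 n))
  set Γ : Cardinal := Γo.card ⊔ ℵ₀ with hΓ
  have hΓκ : Γ < κ := max_lt (Cardinal.lt_ord.mp hΓolt) hℵ
  have hγΓ : ∀ n, (γfun n).card ≤ Γ := by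
    intro n
    have h1 : ((γfun n).card).ord ≤ Γo := Ordinal.le_iSup _ n
    have h2 : (γfun n).card ≤ Γo.card := by
      calc (γfun n).card = (((γfun n).card).ord).card := by rw [Cardinal.card_ord]
        _ ≤ Γo.card := Ordinal.card_le_card h1
    exact h2.trans (le_max_left _ _)
  set θ : Cardinal := Order.succ Γ with hθ
  have hθκ : θ < κ := lt_of_le_of_lt (Order.succ_le_of_lt (Cardinal.cantor Γ)) (hsl.two_power_lt hΓκ)
  -- pigeonhole over the countably many stabilized indices
  set Fib : ℕ → Set Ordinal := fun n => {a | a ∈ A ∧ nn a = n} with hFib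
  have hpig : ∃ n : ℕ, Cardinal.lift.{1} Γ < #(Fib n) := by
    by_contra hno
    push_neg at hno
    have hsub : A ⊆ ⋃ m : ULift.{1} ℕ, Fib m.down := by
      intro a ha
      exact Set.mem_iUnion.mpr ⟨ULift.up (nn a), ha, rfl⟩
    have h1 : #A ≤ Cardinal.sum (fun m : ULift.{1} ℕ => #(Fib m.down)) :=
      (Cardinal.mk_le_mk_of_subset hsub).trans Cardinal.mk_iUnion_le_sum_mk
    have h2 : Cardinal.sum (fun m : ULift.{1} ℕ => #(Fib m.down)) ≤
        Cardinal.sum (fun _ : ULift.{1} ℕ => Cardinal.lift.{1} Γ) :=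
      Cardinal.sum_le_sum _ _ (fun m => hno m.down)
    have h3 : Cardinal.sum (fun _ : ULift.{1} ℕ => Cardinal.lift.{1} Γ) =
        #(ULift.{1} ℕ) * Cardinal.lift.{1} Γ := Cardinal.sum_const' _ _
    have h4 : #(ULift.{1} ℕ) = (ℵ₀ : Cardinal.{1}) := by simp
    have h5 : (ℵ₀ : Cardinal.{1}) * Cardinal.lift.{1} Γ = Cardinal.lift.{1} Γ := by
      refine Cardinal.mul_eq_right ?_ ?_ ?_
      · rw [Cardinal.aleph0_le_lift]; exact le_max_right _ _
      · rw [Cardinal.aleph0_le_lift]; exact le_max_right _ _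
      · exact Cardinal.aleph0_ne_zero
    have h6 : #A ≤ Cardinal.lift.{1} Γ := by
      calc #A ≤ _ := h1
        _ ≤ _ := h2
        _ = _ := by rw [h3, h4, h5]
    rw [hAcard, Cardinal.lift_le] at h6
    exact absurd h6 (not_le.mpr hΓκ)
  obtain ⟨nstar, hnstar⟩ := hpig
  -- an embedding of θ.ord many indices into the fiber
  have hemb : ∃ ψ : ↥(Set.Iio θ.ord) → ↥(Fib nstar), Function.Injective ψ := by
    have h1 : #(Set.Iio θ.ord) ≤ #(Fib nstar) := by
      rw [Ordinal.mk_Iio_ordinal, Cardinal.card_ord, hθ, Cardinal.lift_succ]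
      exact Order.succ_le_of_lt hnstar
    obtain ⟨e⟩ := (Cardinal.le_def _ _).mp h1
    exact ⟨e, e.injective⟩
  obtain ⟨ψ, hψinj⟩ := hemb
  set pick : ∀ i, i < θ.ord → Ordinal := fun i hi => (ψ ⟨i, hi⟩).val with hpick
  have hpickF : ∀ i hi, pick i hi ∈ Fib nstar := fun i hi => (ψ ⟨i, hi⟩).2
  have hpickA : ∀ i hi, pick i hi ∈ A := fun i hi => (hpickF i hi).1
  have hpicknn : ∀ i hi, nn (pick i hi) = nstar := fun i hi => (hpickF i hi).2
  have hpicklt : ∀ i hi, pick i hi < (Order.succ κ).ord := fun i hi => hAsub (hpickA i hi)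
  have hpickinj : ∀ i hi j hj, pick i hi = pick j hj → i = j := by
    intro i hi j hj heq
    have := hψinj (Subtype.ext heq)
    exact congrArg Subtype.val this
  -- branch difference points
  have hdiff : ∀ x y : Ordinal → Ordinal, x ∈ branches κ T → y ∈ branches κ T → x ≠ y →
      ∃ ξ, ξ < κ.ord ∧ x ξ ≠ y ξ := by
    intro x y hx hy hne
    obtain ⟨ξ, hξ⟩ := Function.ne_iff.mp hne
    by_cases h : ξ < κ.ord
    · exact ⟨ξ, h, hξ⟩
    · exfalso
      apply hξ
      have h1 := congrFun hx.1 ξ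
      have h2 := congrFun hy.1 ξ
      rw [h1, h2]
      simp only [restrict, if_neg h]
  set dpt : Ordinal → Ordinal → Ordinal := fun x y =>
    if h : x < (Order.succ κ).ord ∧ y < (Order.succ κ).ord ∧ bfn x ≠ bfn y then
      Order.succ (Classical.choose (hdiff _ _ (hbfn_mem x h.1) (hbfn_mem y h.2.1) h.2.2))
    else 0 with hdptdef
  have hdpt_lt : ∀ x y, dpt x y < κ.ord := by
    intro x y
    rw [hdptdef]
    by_cases h : x < (Order.succ κ).ord ∧ y < (Order.succ κ).ord ∧ bfn x ≠ bfn y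
    · simp only [dif_pos h]
      exact holim.succ_lt
        (Classical.choose_spec (hdiff _ _ (hbfn_mem x h.1) (hbfn_mem y h.2.1) h.2.2)).1
    · simp only [dif_neg h]
      exact holim.pos
  have hdpt_spec : ∀ x y, ∀ h : x < (Order.succ κ).ord ∧ y < (Order.succ κ).ord ∧ bfn x ≠ bfn y,
      ∀ β, dpt x y ≤ β → restrict (bfn x) β ≠ restrict (bfn y) β := by
    intro x y h β hβ heq
    have hspec := Classical.choose_spec (hdiff _ _ (hbfn_mem x h.1) (hbfn_mem y h.2.1) h.2.2)
    set ξ := Classical.choose (hdiff _ _ (hbfn_mem x h.1) (hbfn_mem y h.2.1) h.2.2) with hξdef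
    rw [hdptdef] at hβ
    simp only [dif_pos h] at hβ
    have hξβ : ξ < β := lt_of_lt_of_le (Order.lt_succ ξ) hβ
    have := congrFun heq ξ
    simp only [restrict, if_pos hξβ] at this
    exact hspec.2 this
  -- supremum of difference points
  set bigB : Ordinal := Ordinal.bsup θ.ord (fun i hi =>
    Ordinal.bsup θ.ord (fun j hj => dpt (pick i hi) (pick j hj))) with hbigB
  have hbigBlt : bigB < κ.ord := by
    refine Cardinal.bsup_lt_ord_of_isRegular hreg (by rw [Cardinal.card_ord]; exact hθκ) ?_
    intro i hi
    refine Cardinal.bsup_lt_ord_of_isRegular hreg (by rw [Cardinal.card_ord]; exact hθκ) ?_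
    intro j hj
    exact hdpt_lt _ _
  have hbigBge : ∀ i hi j hj, dpt (pick i hi) (pick j hj) ≤ bigB := by
    intro i hi j hj
    calc dpt (pick i hi) (pick j hj)
        ≤ Ordinal.bsup θ.ord (fun j hj => dpt (pick i hi) (pick j hj)) :=
          Ordinal.le_bsup _ j hj
      _ ≤ bigB := Ordinal.le_bsup _ i hi
  -- choose the level β
  obtain ⟨β, hβX, hβgt, hβℓ⟩ := hγ2 nstar bigB hbigBlt
  have hβS : β ∈ S := hXS hβX
  have hβo : β < κ.ord := hSIio hβS
  -- the final injection
  have hcdβ : ∀ i (hi : i < θ.ord), cd (pick i hi) β < γfun nstar := by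
    intro i hi
    have hmem : β ∈ C (pick i hi) := Set.mem_iInter₂.mp hβX _ (hpickA i hi)
    have h1 : cd (pick i hi) β < ℓfun β (nn (pick i hi)) := hmem.2
    rw [hpicknn i hi] at h1
    exact h1.trans hβℓ
  set J : ↥(Set.Iio θ.ord) → ↥(Set.Iio (γfun nstar)) := fun i =>
    ⟨cd (pick i.1 i.2) β, hcdβ i.1 i.2⟩ with hJ
  have hJinj : Function.Injective J := by
    intro i j heq
    by_contra hne
    have hij : i.1 ≠ j.1 := fun h => hne (Subtype.ext h)
    have hpickne : pick i.1 i.2 ≠ pick j.1 j.2 := fun h => hij (hpickinj _ _ _ _ h)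
    have hbfnne : bfn (pick i.1 i.2) ≠ bfn (pick j.1 j.2) := by
      intro h
      exact hpickne (hbfn_inj _ (hpicklt i.1 i.2) _ (hpicklt j.1 j.2) h)
    have htriple : pick i.1 i.2 < (Order.succ κ).ord ∧ pick j.1 j.2 < (Order.succ κ).ord ∧
        bfn (pick i.1 i.2) ≠ bfn (pick j.1 j.2) := ⟨hpicklt i.1 i.2, hpicklt j.1 j.2, hbfnne⟩
    have hdle : dpt (pick i.1 i.2) (pick j.1 j.2) ≤ β := (hbigBge i.1 i.2 j.1 j.2).trans hβgt.le
    have htr : restrict (bfn (pick i.1 i.2)) β ≠ restrict (bfn (pick j.1 j.2)) β :=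
      hdpt_spec _ _ htriple β hdle
    have hcdval : cd (pick i.1 i.2) β = cd (pick j.1 j.2) β := congrArg Subtype.val heq
    have := hc2 β hβS _ (htrc_mem _ (hpicklt i.1 i.2) β hβo)
      _ (htrc_mem _ (hpicklt j.1 j.2) β hβo) hcdval
    exact htr this
  have hle := Cardinal.mk_le_of_injective hJinj
  rw [Ordinal.mk_Iio_ordinal, Ordinal.mk_Iio_ordinal, Cardinal.card_ord, Cardinal.lift_le] at hle
  have hfin : θ ≤ Γ := hle.trans (hγΓ nstar)
  exact absurd hfin (not_le.mpr (Order.lt_succ Γ))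


end GK
end
end

section
/- Let κ be a measurable cardinal. Then there is no slim κ-Kurepa tree; that is, every κ-tree T with at least κ⁺ many cofinal branches has some infinite level β < κ with |L_β(T)| > |β|. -/
open Cardinal Set

noncomputable section

namespace GK

/-- If `κ` is measurable then there is no slim `κ`-Kurepa tree: every
`κ`-tree with at least `κ⁺` many cofinal branches has an infinite level `β` of size
greater than `|β|`. -/
theorem measurable_no_slim_kurepa_tree (κ : Cardinal.{0})
    (hκ : ℵ₀ < κ)
    (hmeas : ∃ U : Set (Set Ordinal), IsUltrafilterOn κ U ∧ KappaComplete κ U ∧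
      ∀ α : Ordinal, {α} ∉ U)
    (T : Set (Ordinal × (Ordinal → Ordinal))) (hT : IsKappaTree κ T)
    (hbr : Cardinal.lift.{1} (Order.succ κ) ≤ #(branches κ T)) :
    ∃ β : Ordinal, Ordinal.omega0 ≤ β ∧ β < κ.ord ∧
      Cardinal.lift.{1} β.card < #(level T β) := by
  by_contra hcon
  push_neg at hcon
  obtain ⟨U, ⟨hUsub, hUuniv, hUempty, hUup, hUinter, hUultra⟩, hUcomp, hUsing⟩ := hmeas
  set I : Set Ordinal := Set.Iio κ.ord with hIdef
  have hsubI : ∀ P : Ordinal → Prop, {α | α < κ.ord ∧ P α} ⊆ I := fun P α h => h.1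
  have hne : ∀ X ∈ U, X.Nonempty := by
    intro X hX
    rcases X.eq_empty_or_nonempty with h | h
    · exact absurd (h ▸ hX) hUempty
    · exact h
  have hωκ : Ordinal.omega0 < κ.ord := by
    rw [Cardinal.lt_ord, Ordinal.card_omega0]; exact hκ
  -- constancy from boundedness
  have hconst : ∀ (g : Ordinal → Ordinal) (δ : Ordinal), δ < κ.ord →
      {α | α < κ.ord ∧ g α < δ} ∈ U → ∃ γ, {α | α < κ.ord ∧ g α = γ} ∈ U := by
    intro g δ hδ hg
    by_contra hno
    push_neg at hno
    have hcompl : ∀ γ : Ordinal, I \ {α | α < κ.ord ∧ g α = γ} ∈ U := fun γ =>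
      (hUultra _ (hsubI _)).resolve_left (hno γ)
    have hcard : #δ.ToType < κ := by rw [Cardinal.mk_toType]; exact Cardinal.lt_ord.mp hδ
    have hK := hUcomp δ.ToType
      (fun i => I \ {α | α < κ.ord ∧ g α = ((Ordinal.ToType.mk (o := δ)).symm i : Ordinal)})
      hcard (fun i => hcompl _)
    obtain ⟨α, ⟨⟨hα1, hα2⟩, hα3, hα4⟩⟩ := hne _ (hUinter _ _ hK hg)
    set i := Ordinal.ToType.mk (o := δ) ⟨g α, hα4⟩ with hi
    have hαi := Set.mem_iInter.mp hα2 i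
    apply hαi.2
    refine ⟨hα3, ?_⟩
    rw [hi, OrderIso.symm_apply_apply]
  -- no U-constant value is possible for the identity
  have hid : ∀ γ : Ordinal, {α | α < κ.ord ∧ α = γ} ∉ U := by
    intro γ hγ
    obtain ⟨α, hα1, hα2⟩ := hne _ hγ
    subst hα2
    have : {β | β < κ.ord ∧ β = α} = {α} := by
      ext x; simp only [Set.mem_setOf_eq, Set.mem_singleton_iff]
      exact ⟨fun h => h.2, fun h => ⟨h ▸ hα1, h⟩⟩
    exact hUsing α (this ▸ hγ)
  -- well-foundedness of <_U
  have hwf : WellFounded (fun g f : Ordinal → Ordinal =>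
      {α | α < κ.ord ∧ g α < f α} ∈ U) := by
    haveI : IsIrrefl (Ordinal → Ordinal)
        (fun g f : Ordinal → Ordinal => {α | α < κ.ord ∧ g α < f α} ∈ U) := by
      constructor
      intro g hg
      have : {α | α < κ.ord ∧ g α < g α} = ∅ := by
        ext x; simp only [Set.mem_setOf_eq, Set.mem_empty_iff_false, iff_false]
        exact fun h => lt_irrefl _ h.2
      exact hUempty (this ▸ hg)
    haveI : IsTrans (Ordinal → Ordinal)
        (fun g f : Ordinal → Ordinal => {α | α < κ.ord ∧ g α < f α} ∈ U) := by
      constructor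
      intro a b c hab hbc
      exact hUup _ _ (hUinter _ _ hab hbc)
        (fun α h => ⟨h.1.1, h.1.2.trans h.2.2⟩) (hsubI _)
    haveI : IsStrictOrder (Ordinal → Ordinal)
        (fun g f : Ordinal → Ordinal => {α | α < κ.ord ∧ g α < f α} ∈ U) := ⟨⟩
    rw [RelEmbedding.wellFounded_iff_isEmpty]
    constructor
    intro e
    have hA : ∀ n : ℕ, {α | α < κ.ord ∧ e (n + 1) α < e n α} ∈ U := fun n =>
      e.map_rel_iff.mpr (Nat.lt_succ_self n)
    have hK := hUcomp ℕ (fun n => {α | α < κ.ord ∧ e (n + 1) α < e n α})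
      (by rw [Cardinal.mk_nat]; exact hκ) hA
    obtain ⟨α, hα1, hα2⟩ := hne _ hK
    have hdec : ∀ n : ℕ, e (n + 1) α < e n α := fun n => (Set.mem_iInter.mp hα2 n).2
    exact (RelEmbedding.wellFounded_iff_isEmpty.mp Ordinal.lt_wf).false
      (RelEmbedding.natGT (fun n => e n α) hdec)
  -- minimal non-constant function
  set S : Set (Ordinal → Ordinal) :=
    {g | {α | α < κ.ord ∧ g α < κ.ord} ∈ U ∧ ∀ γ, {α | α < κ.ord ∧ g α = γ} ∉ U} with hSdef
  have hSne : S.Nonempty := by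
    refine ⟨id, ?_, hid⟩
    exact hUup _ _ hUuniv (fun α h => ⟨h, h⟩) (hsubI _)
  obtain ⟨f, hfS, hfmin⟩ := hwf.has_min S hSne
  have hfκ : {α | α < κ.ord ∧ f α < κ.ord} ∈ U := hfS.1
  have hfnc : ∀ γ, {α | α < κ.ord ∧ f α = γ} ∉ U := hfS.2
  -- pressing down below f
  have hpress : ∀ g : Ordinal → Ordinal, {α | α < κ.ord ∧ g α < f α} ∈ U →
      ∃ γ, {α | α < κ.ord ∧ g α = γ} ∈ U := by
    intro g hg
    by_contra hno
    push_neg at hno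
    refine hfmin g ⟨?_, hno⟩ hg
    have := hUinter _ _ hg hfκ
    exact hUup _ _ this (fun α h => ⟨h.1.1, h.1.2.trans h.2.2⟩) (hsubI _)
  -- f is not U-bounded below any δ < κ.ord
  have hfnb : ∀ δ < κ.ord, {α | α < κ.ord ∧ f α ≤ δ} ∉ U := by
    intro δ hδ h
    have hδ' : Order.succ δ < κ.ord := (Cardinal.isSuccLimit_ord hκ.le).succ_lt hδ
    obtain ⟨γ, hγ⟩ := hconst f (Order.succ δ) hδ'
      (hUup _ _ h (fun α hα => ⟨hα.1, Order.lt_succ_iff.mpr hα.2⟩) (hsubI _))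
    exact hfnc γ hγ
  -- f is U-often infinite
  have hfω : {α | α < κ.ord ∧ Ordinal.omega0 ≤ f α} ∈ U := by
    by_contra h
    have h2 := (hUultra _ (hsubI _)).resolve_left h
    have h3 : {α | α < κ.ord ∧ f α < Ordinal.omega0} ∈ U :=
      hUup _ _ h2 (fun α hα => ⟨hα.1, not_le.mp fun hc => hα.2 ⟨hα.1, hc⟩⟩) (hsubI _)
    obtain ⟨γ, hγ⟩ := hconst f Ordinal.omega0 hωκ h3
    exact hfnc γ hγ
  -- values of f on a U-set are unbounded in κ.ord
  have hfunb : ∀ A ∈ U, ∀ δ < κ.ord, ∃ α ∈ A, δ < f α ∧ f α < κ.ord ∧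
      Ordinal.omega0 ≤ f α := by
    intro A hA δ hδ
    have h2 : I \ {α | α < κ.ord ∧ f α ≤ δ} ∈ U :=
      (hUultra _ (hsubI _)).resolve_left (hfnb δ hδ)
    obtain ⟨α, ⟨⟨hαA, hα2⟩, hα3, hα4⟩⟩ :=
      hne _ (hUinter _ _ (hUinter _ _ hA h2) (hUinter _ _ hfκ hfω))
    refine ⟨α, hαA, ?_, hα3.2, hα4.2⟩
    exact not_le.mp fun hc => hα2.2 ⟨hα2.1, hc⟩
  -- slimness gives indexings of levels
  have hemb : ∀ β, Ordinal.omega0 ≤ β → β < κ.ord →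
      Nonempty ((level T β) ↪ (Set.Iio β : Set Ordinal)) := by
    intro β h1 h2
    have h3 := hcon β h1 h2
    rw [← Ordinal.mk_Iio_ordinal] at h3
    exact (Cardinal.le_def _ _).mp h3
  have e : ∀ β, Ordinal.omega0 ≤ β → β < κ.ord →
      ((level T β) ↪ (Set.Iio β : Set Ordinal)) := fun β h1 h2 => (hemb β h1 h2).some
  -- index function of a branch
  classical
  set G : (Ordinal → Ordinal) → Ordinal → Ordinal := fun b β =>
    if h : Ordinal.omega0 ≤ β ∧ β < κ.ord ∧ restrict b β ∈ level T β
    then ((e β h.1 h.2.1 ⟨restrict b β, h.2.2⟩ : Set.Iio β) : Ordinal) else 0 with hGdef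
  have hmemlvl : ∀ b ∈ branches κ T, ∀ β, β < κ.ord → restrict b β ∈ level T β :=
    fun b hb β hβ => hb.2 β hβ
  have hGlt : ∀ b ∈ branches κ T, ∀ β, Ordinal.omega0 ≤ β → β < κ.ord → G b β < β := by
    intro b hb β h1 h2
    have hcnd : Ordinal.omega0 ≤ β ∧ β < κ.ord ∧ restrict b β ∈ level T β :=
      ⟨h1, h2, hmemlvl b hb β h2⟩
    rw [hGdef]
    simp only [dif_pos hcnd]
    exact (e β hcnd.1 hcnd.2.1 ⟨restrict b β, hcnd.2.2⟩).2
  have hGinj : ∀ b ∈ branches κ T, ∀ b' ∈ branches κ T, ∀ β,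
      Ordinal.omega0 ≤ β → β < κ.ord → G b β = G b' β →
      restrict b β = restrict b' β := by
    intro b hb b' hb' β h1 h2 heq
    have hc1 : Ordinal.omega0 ≤ β ∧ β < κ.ord ∧ restrict b β ∈ level T β :=
      ⟨h1, h2, hmemlvl b hb β h2⟩
    have hc2 : Ordinal.omega0 ≤ β ∧ β < κ.ord ∧ restrict b' β ∈ level T β :=
      ⟨h1, h2, hmemlvl b' hb' β h2⟩
    rw [hGdef] at heq
    simp only [dif_pos hc1, dif_pos hc2] at heq
    have := (e β h1 h2).injective (Subtype.coe_injective heq)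
    exact congrArg Subtype.val this
  -- each branch has a U-constant index
  have hchoice : ∀ b : branches κ T, ∃ γ,
      {α | α < κ.ord ∧ G b.1 (f α) = γ} ∈ U := by
    intro b
    apply hpress
    refine hUup _ _ (hUinter _ _ hfω hfκ) (fun α h => ?_) (hsubI _)
    exact ⟨h.1.1, hGlt b.1 b.2 (f α) h.1.2 h.2.2⟩
  choose Φ hΦ using hchoice
  -- Φ b < κ.ord
  have hΦlt : ∀ b : branches κ T, Φ b < κ.ord := by
    intro b
    obtain ⟨α, hα, hα1, hα2, hα3⟩ := hfunb _ (hΦ b) 0 (Ordinal.omega0_pos.trans hωκ)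
    rw [← hα.2]
    calc G b.1 (f α) < f α := hGlt b.1 b.2 (f α) hα3 hα2
    _ < κ.ord := hα2
  -- Φ is injective
  have hΦinj : Function.Injective Φ := by
    intro b b' hbb
    have hX : {α | α < κ.ord ∧ G b.1 (f α) = Φ b} ∩
        {α | α < κ.ord ∧ G b'.1 (f α) = Φ b'} ∈ U := hUinter _ _ (hΦ b) (hΦ b')
    have key : ∀ x < κ.ord, b.1 x = b'.1 x := by
      intro x hx
      obtain ⟨α, hαX, h1, h2, h3⟩ := hfunb _ hX x hx
      have heq : G b.1 (f α) = G b'.1 (f α) := by rw [hαX.1.2, hαX.2.2, hbb]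
      have hres := hGinj b.1 b.2 b'.1 b'.2 (f α) h3 h2 heq
      have := congrFun hres x
      simpa only [restrict, if_pos h1] using this
    have hfun : b.1 = b'.1 := by
      funext x
      by_cases hx : x < κ.ord
      · exact key x hx
      · have hb := congrFun b.2.1 x
        have hb' := congrFun b'.2.1 x
        rw [hb, hb']
        simp only [restrict, if_neg hx]
    exact Subtype.ext hfun
  -- conclude
  have hle : #(branches κ T) ≤ #(Set.Iio κ.ord : Set Ordinal) :=
    Cardinal.mk_le_of_injective (f := fun b => (⟨Φ b, hΦlt b⟩ : (Set.Iio κ.ord : Set Ordinal)))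
      (fun b b' h => hΦinj (congrArg Subtype.val h))
  rw [Ordinal.mk_Iio_ordinal, Cardinal.card_ord] at hle
  have := hbr.trans hle
  rw [Cardinal.lift_le] at this
  exact (Order.lt_succ κ).not_ge this


end GK
end
end

section
/- Let κ be an uncountable cardinal with κ^{<κ} = κ and let 𝓕 be a normal ultrafilter over κ. Then Gal(𝓕, κ, κ⁺) holds: for every family {C_α : α < κ⁺} of sets in 𝓕 there exists A ⊆ κ⁺ with |A| = κ such that ⋂_{α ∈ A} C_α ∈ 𝓕. -/
open Cardinal Set

noncomputable section

namespace GK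

/-- `U` is a normal ultrafilter over `κ`: a `κ`-complete ultrafilter containing all
final segments of `κ` and closed under diagonal intersections. -/
def IsNormalUF (κ : Cardinal.{0}) (U : Set (Set Ordinal)) : Prop :=
  IsUltrafilterOn κ U ∧ KappaComplete κ U ∧
  (∀ β < κ.ord, {α : Ordinal | β < α ∧ α < κ.ord} ∈ U) ∧
  (∀ C : Ordinal → Set Ordinal, (∀ β < κ.ord, C β ∈ U) →
    {α : Ordinal | α < κ.ord ∧ ∀ β < α, α ∈ C β} ∈ U)

/-- Auxiliary recursive choice function for Galvin's theorem: `chooser ν C a j` is the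
least ordinal `α < ν` whose `C`-pattern below `j+1` agrees with that of `a`, lying above
all previously chosen ordinals. -/
def chooser (ν : Ordinal) (C : Ordinal → Set Ordinal) (a : Ordinal) : Ordinal → Ordinal :=
  Ordinal.lt_wf.fix (fun j ih =>
    sInf {α | α < ν ∧ C α ∩ Set.Iio (j + 1) = C a ∩ Set.Iio (j + 1) ∧
      ∀ i, ∀ h : i < j, ih i h < α})

theorem chooser_eq (ν : Ordinal) (C : Ordinal → Set Ordinal) (a : Ordinal) (j : Ordinal) :
    chooser ν C a j =
      sInf {α | α < ν ∧ C α ∩ Set.Iio (j + 1) = C a ∩ Set.Iio (j + 1) ∧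
        ∀ i, ∀ _ : i < j, chooser ν C a i < α} := by
  unfold chooser
  rw [WellFounded.fix_eq]

/-- Galvin's theorem: if `κ` is uncountable with `κ^{<κ} = κ` and `F` is
a normal ultrafilter over `κ`, then `Gal(F, κ, κ⁺)` holds. -/
theorem galvin_theorem_normal_ultrafilter (κ : Cardinal.{0})
    (hκ : ℵ₀ < κ) (hsr : κ ^< κ = κ)
    (F : Set (Set Ordinal)) (hF : IsNormalUF κ F) :
    Galvin κ F := by
  classical
  obtain ⟨⟨hsub, hIio, hemp, hup, hinterF, hult⟩, hcomp, hfin, hnorm⟩ := hF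
  intro C hC
  set ν := (Order.succ κ).ord with hνdef
  have hκ0 : ℵ₀ ≤ κ := hκ.le
  have hregν : (Order.succ κ).IsRegular := Cardinal.isRegular_succ hκ0
  have hcof : ν.cof = Order.succ κ := hregν.cof_eq
  have hνlim : Order.IsSuccLimit ν := Cardinal.isSuccLimit_ord (hκ0.trans (Order.le_succ κ))
  have hκlim : Order.IsSuccLimit κ.ord := Cardinal.isSuccLimit_ord hκ0
  have hsuccν : ∀ a < ν, a + 1 < ν := fun a ha => by
    rw [Ordinal.add_one_eq_succ]; exact hνlim.succ_lt ha
  have hsuccκ : ∀ a < κ.ord, a + 1 < κ.ord := fun a ha => by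
    rw [Ordinal.add_one_eq_succ]; exact hκlim.succ_lt ha
  have hcardν : ∀ β < ν, β.card ≤ κ := fun β hβ =>
    Order.lt_succ_iff.mp (Cardinal.lt_ord.mp hβ)
  have hcardκ : ∀ j < κ.ord, j.card < κ := fun j hj => Cardinal.lt_ord.mp hj
  -- the set of "bad" ordinals: those with some bounded pattern-class
  set Bad : Set Ordinal := {α | α < ν ∧ ∃ j, j < κ.ord ∧ ∃ β, β < ν ∧
    ∀ α', α' < ν → C α' ∩ Set.Iio j = C α ∩ Set.Iio j → α' ≤ β} with hBadDef
  have hBadCard : #Bad ≤ Cardinal.lift.{1} κ := by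
    set ι := Σ j : (Set.Iio κ.ord : Set Ordinal), ↥(𝒫 (Set.Iio (j : Ordinal))) with hιdef
    set G : ι → Set Ordinal := fun i =>
      {α | α < ν ∧ C α ∩ Set.Iio (i.1 : Ordinal) = (i.2 : Set Ordinal) ∧ ∃ β, β < ν ∧
        ∀ α', α' < ν → C α' ∩ Set.Iio (i.1 : Ordinal) = C α ∩ Set.Iio (i.1 : Ordinal) →
          α' ≤ β} with hGdef
    have hsubU : Bad ⊆ ⋃ i, G i := by
      rintro α ⟨hαν, j, hj, hBdd⟩
      exact Set.mem_iUnion.mpr ⟨⟨⟨j, hj⟩, ⟨C α ∩ Set.Iio j, fun x hx => hx.2⟩⟩,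
        hαν, rfl, hBdd⟩
    have h2κ : (2 : Cardinal) ≤ κ := le_trans (by exact_mod_cast (Cardinal.nat_lt_aleph0 2).le) hκ0
    have hι : #ι ≤ Cardinal.lift.{1} κ := by
      have h1 : ∀ j : (Set.Iio κ.ord : Set Ordinal),
          #(↥(𝒫 (Set.Iio (j : Ordinal)))) ≤ Cardinal.lift.{1} κ := by
        intro j
        rw [Cardinal.mk_powerset, Ordinal.mk_Iio_ordinal, ← Cardinal.lift_two.{1,0},
          ← Cardinal.lift_power, Cardinal.lift_le]
        calc (2 : Cardinal) ^ (j : Ordinal).card ≤ κ ^ (j : Ordinal).card :=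
              Cardinal.power_le_power_right h2κ
          _ ≤ κ ^< κ := Cardinal.le_powerlt κ (hcardκ _ j.2)
          _ = κ := hsr
      calc #ι = Cardinal.sum (fun j : (Set.Iio κ.ord : Set Ordinal) =>
              #(↥(𝒫 (Set.Iio (j : Ordinal))))) := Cardinal.mk_sigma _
        _ ≤ Cardinal.sum (fun _ : (Set.Iio κ.ord : Set Ordinal) => Cardinal.lift.{1} κ) :=
              Cardinal.sum_le_sum _ _ h1
        _ = #(Set.Iio κ.ord : Set Ordinal) * Cardinal.lift.{1} κ := Cardinal.sum_const' _ _
        _ = Cardinal.lift.{1} κ * Cardinal.lift.{1} κ := by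
              rw [Ordinal.mk_Iio_ordinal, Cardinal.card_ord]
        _ = Cardinal.lift.{1} κ := Cardinal.mul_eq_self (Cardinal.aleph0_le_lift.mpr hκ0)
    have hG : ∀ i : ι, #(G i) ≤ Cardinal.lift.{1} κ := by
      intro i
      rcases Set.eq_empty_or_nonempty (G i) with he | ⟨α₀, hα₀⟩
      · rw [he, Cardinal.mk_emptyCollection]; exact zero_le
      · obtain ⟨hα₀ν, hα₀pat, β, hβν, hbdd⟩ := hα₀
        have hsb : G i ⊆ Set.Iio (β + 1) := by
          rintro α ⟨hαν, hαpat, -⟩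
          have hle : α ≤ β := hbdd α hαν (hαpat.trans hα₀pat.symm)
          rw [Set.mem_Iio, Ordinal.add_one_eq_succ, Order.lt_succ_iff]
          exact hle
        calc #(G i) ≤ #(Set.Iio (β + 1) : Set Ordinal) := Cardinal.mk_le_mk_of_subset hsb
          _ = Cardinal.lift.{1} (β + 1).card := Ordinal.mk_Iio_ordinal _
          _ ≤ Cardinal.lift.{1} κ := Cardinal.lift_le.mpr (hcardν _ (hsuccν β hβν))
    calc #Bad ≤ #(⋃ i, G i) := Cardinal.mk_le_mk_of_subset hsubU
      _ ≤ #ι * ⨆ i, #(G i) := Cardinal.mk_iUnion_le _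
      _ ≤ Cardinal.lift.{1} κ * Cardinal.lift.{1} κ := mul_le_mul' hι (ciSup_le' hG)
      _ = Cardinal.lift.{1} κ := Cardinal.mul_eq_self (Cardinal.aleph0_le_lift.mpr hκ0)
  -- pick a "good" ordinal α* below ν
  have hnotsub : ¬ (Set.Iio ν ⊆ Bad) := by
    intro h
    have h1 : #(Set.Iio ν : Set Ordinal) ≤ #Bad := Cardinal.mk_le_mk_of_subset h
    rw [Ordinal.mk_Iio_ordinal, Cardinal.card_ord] at h1
    exact absurd (h1.trans hBadCard) (not_le.mpr (Cardinal.lift_lt.mpr (Order.lt_succ κ)))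
  obtain ⟨αs, hαsν, hαsBad⟩ := Set.not_subset.mp hnotsub
  rw [Set.mem_Iio] at hαsν
  have hGood : ∀ j < κ.ord, ∀ β < ν, ∃ α', α' < ν ∧
      C α' ∩ Set.Iio j = C αs ∩ Set.Iio j ∧ β < α' := by
    intro j hj β hβ
    by_contra hcon
    push_neg at hcon
    exact hαsBad ⟨hαsν, j, hj, β, hβ, fun α' h1 h2 => hcon α' h1 h2⟩
  -- the recursive choice function
  set g : Ordinal → Ordinal := chooser ν C αs with hgdef
  have key : ∀ j, j < κ.ord → g j < ν ∧
      C (g j) ∩ Set.Iio (j + 1) = C αs ∩ Set.Iio (j + 1) ∧ ∀ i, i < j → g i < g j := by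
    intro j
    induction j using Ordinal.induction with
    | h j IH =>
      intro hj
      have hS : {α | α < ν ∧ C α ∩ Set.Iio (j + 1) = C αs ∩ Set.Iio (j + 1) ∧
          ∀ i, ∀ _ : i < j, g i < α}.Nonempty := by
        have hBν : Ordinal.bsup j (fun i _ => g i + 1) < ν := by
          apply Ordinal.bsup_lt_ord
          · rw [hcof]; exact (hcardκ j hj).trans (Order.lt_succ κ)
          · intro i hi
            exact hsuccν _ ((IH i hi (hi.trans hj)).1)
        obtain ⟨α', hα'ν, hα'pat, hα'B⟩ := hGood (j + 1) (hsuccκ j hj) _ hBν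
        refine ⟨α', hα'ν, hα'pat, fun i hi => ?_⟩
        have h1 : g i + 1 ≤ Ordinal.bsup j (fun i _ => g i + 1) :=
          Ordinal.le_bsup (fun i _ => g i + 1) i hi
        have h2 : g i < g i + 1 := by
          rw [Ordinal.add_one_eq_succ]; exact Order.lt_succ _
        exact h2.trans_le (h1.trans hα'B.le)
      have hmem := csInf_mem hS
      have heq := chooser_eq ν C αs j
      rw [hgdef]
      rw [heq]
      exact ⟨hmem.1, hmem.2.1, fun i hi => hmem.2.2 i hi⟩
  have hgν : ∀ j < κ.ord, g j < ν := fun j hj => (key j hj).1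
  have hinj : Set.InjOn g (Set.Iio κ.ord) := by
    intro i hi j hj hij
    rcases lt_trichotomy i j with h | h | h
    · exact absurd hij (ne_of_lt ((key j hj).2.2 i h))
    · exact h
    · exact absurd hij.symm (ne_of_lt ((key i hi).2.2 j h))
  refine ⟨g '' Set.Iio κ.ord, ?_, ?_, ?_⟩
  · rintro x ⟨j, hj, rfl⟩
    exact hgν j hj
  · rw [Cardinal.mk_image_eq_of_injOn _ _ hinj, Ordinal.mk_Iio_ordinal, Cardinal.card_ord]
  · have hgF : ∀ β < κ.ord, C (g β) ∈ F := fun β hβ => hC _ (hgν β hβ)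
    have hD : {α | α < κ.ord ∧ ∀ β < α, α ∈ C (g β)} ∈ F := hnorm _ hgF
    have hCαs : C αs ∈ F := hC αs hαsν
    have hDA : ({α | α < κ.ord ∧ ∀ β < α, α ∈ C (g β)} ∩ C αs) ∈ F := hinterF _ _ hD hCαs
    have hsub2 : ({α | α < κ.ord ∧ ∀ β < α, α ∈ C (g β)} ∩ C αs) ⊆
        ⋂ α ∈ g '' Set.Iio κ.ord, C α := by
      rintro γ ⟨⟨hγκ, hdiag⟩, hγαs⟩
      refine Set.mem_iInter₂.mpr ?_
      rintro x ⟨j, hj, rfl⟩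
      rcases lt_or_ge j γ with h | h
      · exact hdiag j h
      · have hγj : γ < j + 1 := by
          rw [Ordinal.add_one_eq_succ, Order.lt_succ_iff]; exact h
        have hpat := (key j hj).2.1
        have hmem : γ ∈ C (g j) ∩ Set.Iio (j + 1) := by
          rw [hpat]; exact ⟨hγαs, hγj⟩
        exact hmem.1
    have hsub3 : (⋂ α ∈ g '' Set.Iio κ.ord, C α) ⊆ Set.Iio κ.ord := by
      intro γ hγ
      have h0 : γ ∈ C (g 0) :=
        Set.mem_iInter₂.mp hγ (g 0) ⟨0, hκlim.pos, rfl⟩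
      exact hsub _ (hgF 0 hκlim.pos) h0
    exact hup _ _ hDA hsub2 hsub3

end GK
end
end

section
/- Let κ be an infinite cardinal and let 𝒰 and 𝒱 be ultrafilters over κ that are Rudin-Keisler equivalent, i.e., there exist functions f, g : κ → κ such that 𝒱 is the pushforward of 𝒰 under f and 𝒰 is the pushforward of 𝒱 under g. Then Gal(𝒰, κ, κ⁺) holds if and only if Gal(𝒱, κ, κ⁺) holds. -/
open Cardinal Set

noncomputable section

namespace GK

/-- The pushforward (Rudin–Keisler image) of an ultrafilter over `κ` under
`f : κ → κ`. -/
def Pushforward (κ : Cardinal.{0}) (f : Ordinal → Ordinal) (U : Set (Set Ordinal)) :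
    Set (Set Ordinal) :=
  {A | A ⊆ Set.Iio κ.ord ∧ (f ⁻¹' A) ∩ Set.Iio κ.ord ∈ U}

theorem galvin_of_pushforward (κ : Cardinal.{0}) (hκ : ℵ₀ ≤ κ)
    (U V : Set (Set Ordinal)) (f : Ordinal → Ordinal)
    (hfU : V = Pushforward κ f U) (hGal : Galvin κ U) : Galvin κ V := by
  intro C hC
  have hC' : ∀ α < (Order.succ κ).ord, (f ⁻¹' C α) ∩ Set.Iio κ.ord ∈ U := by
    intro α hα
    have := hC α hα
    rw [hfU] at this
    exact this.2
  obtain ⟨A, hA1, hA2, hA3⟩ := hGal (fun α => f ⁻¹' C α ∩ Set.Iio κ.ord) hC'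
  have hAne : A.Nonempty := by
    rw [Set.nonempty_iff_ne_empty]
    intro h
    rw [h] at hA2
    simp only [Cardinal.mk_emptyCollection] at hA2
    have : κ = 0 := by
      have := hA2.symm
      rwa [Cardinal.lift_eq_zero] at this
    rw [this] at hκ
    exact absurd hκ (by simp [Cardinal.aleph0_ne_zero])
  obtain ⟨α0, hα0⟩ := hAne
  refine ⟨A, hA1, hA2, ?_⟩
  rw [hfU]
  constructor
  · have := hC α0 (hA1 hα0)
    rw [hfU] at this
    exact (Set.biInter_subset_of_mem hα0).trans this.1
  · have heq : f ⁻¹' (⋂ α ∈ A, C α) ∩ Set.Iio κ.ord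
        = ⋂ α ∈ A, (f ⁻¹' C α ∩ Set.Iio κ.ord) := by
      ext x
      simp only [Set.mem_inter_iff, Set.mem_preimage, Set.mem_iInter]
      constructor
      · rintro ⟨h1, h2⟩ α hα
        exact ⟨h1 α hα, h2⟩
      · intro h
        exact ⟨fun α hα => (h α hα).1, (h α0 hα0).2⟩
    rw [heq]
    exact hA3

/-- The Galvin property `Gal(·, κ, κ⁺)` is invariant under Rudin–Keisler
equivalence of ultrafilters over `κ`. -/
theorem galvin_rudin_keisler_invariant (κ : Cardinal.{0}) (hκ : ℵ₀ ≤ κ)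
    (U V : Set (Set Ordinal)) (hU : IsUltrafilterOn κ U) (hV : IsUltrafilterOn κ V)
    (f g : Ordinal → Ordinal)
    (hf : ∀ α < κ.ord, f α < κ.ord) (hg : ∀ α < κ.ord, g α < κ.ord)
    (hfU : V = Pushforward κ f U) (hgV : U = Pushforward κ g V) :
    Galvin κ U ↔ Galvin κ V :=
  ⟨galvin_of_pushforward κ hκ U V f hfU, galvin_of_pushforward κ hκ V U g hgV⟩

end GK
end
end
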